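/- arXiv:2503.16618 — 5 statements merged into one kernel-verified Lean document; each statement's English description precedes it below -/
import Mathlib

section
/- For an integer n ≥ 2, let x_n := E_{11} − Σ_{k=2}^{n} (1/k) E_{kk} ∈ M_n(ℂ), where E_{kk} denote the standard diagonal matrix units. Then there exists no positive linear functional ψ : M_n(ℂ) → ℂ with ‖ψ‖ = 1 and ψ(x_n) = −1. -/
open scoped ComplexOrder

noncomputable section

universe u v w

/-- A bundled complex Hilbert space. -/
structure HilbertC : Type (u + 1) where
  carrier : Type u
  [nacg : NormedAddCommGroup carrier]
  [ips : InnerProductSpace ℂ carrier]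
  [cs : CompleteSpace carrier]

attribute [instance] HilbertC.nacg HilbertC.ips HilbertC.cs

instance : CoeSort HilbertC.{u} (Type u) := ⟨HilbertC.carrier⟩

section Defs

variable {A B C : Type*}

/-- Positivity in a C*-algebra (or a matrix algebra over one): `x = y* y`. -/
def IsPosElem [NonUnitalSemiring A] [StarRing A] (x : A) : Prop :=
  ∃ y, x = star y * y

/-- The C*-norm of a matrix over a C*-algebra, realized as the operator norm of the
left-multiplication action on the Hilbert `A`-module `Aⁿ`. -/
def matCNorm [NonUnitalNormedRing A] [StarRing A] {n : ℕ}
    (x : Matrix (Fin n) (Fin n) A) : ℝ :=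
  sSup {r : ℝ | ∃ v : Fin n → A, ‖∑ i, star (v i) * v i‖ ≤ 1 ∧
    r = Real.sqrt ‖∑ i, star (∑ j, x i j * v j) * (∑ j, x i j * v j)‖}

/-- A linear map between C*-algebras is completely positive if all of its matrix
amplifications preserve positivity. -/
def IsCPMap [NonUnitalNormedRing A] [StarRing A] [Module ℂ A]
    [NonUnitalNormedRing B] [StarRing B] [Module ℂ B]
    (φ : A →ₗ[ℂ] B) : Prop :=
  ∀ (n : ℕ) (x : Matrix (Fin n) (Fin n) A), IsPosElem x → IsPosElem (x.map ⇑φ)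

/-- A linear map between C*-algebras is completely contractive if all of its matrix
amplifications are contractive. -/
def IsCCMap [NonUnitalNormedRing A] [StarRing A] [Module ℂ A]
    [NonUnitalNormedRing B] [StarRing B] [Module ℂ B]
    (φ : A →ₗ[ℂ] B) : Prop :=
  ∀ (n : ℕ) (x : Matrix (Fin n) (Fin n) A), matCNorm (x.map ⇑φ) ≤ matCNorm x

/-- Completely contractive completely positive map. -/
def IsCCPMap [NonUnitalNormedRing A] [StarRing A] [Module ℂ A]
    [NonUnitalNormedRing B] [StarRing B] [Module ℂ B]
    (φ : A →ₗ[ℂ] B) : Prop :=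
  IsCPMap φ ∧ IsCCMap φ

/-- Unital completely positive map. -/
def IsUCPMap [NormedRing A] [StarRing A] [Module ℂ A]
    [NormedRing B] [StarRing B] [Module ℂ B]
    (φ : A →ₗ[ℂ] B) : Prop :=
  IsCPMap φ ∧ φ 1 = 1

/-- A positive linear functional: it maps positive elements to nonnegative reals. -/
def IsPosFunctional [NonUnitalNormedRing C] [StarRing C] [Module ℂ C]
    (φ : C →ₗ[ℂ] ℂ) : Prop :=
  ∀ x, IsPosElem x → 0 ≤ φ x

/-- A contractive linear functional. -/
def IsContrFunctional [NonUnitalNormedRing C] [StarRing C] [Module ℂ C]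
    (φ : C →ₗ[ℂ] ℂ) : Prop :=
  ∀ x, ‖φ x‖ ≤ ‖x‖

variable [NonUnitalCStarAlgebra C]

/-- `G` generates `C` as a C*-algebra: the smallest closed *-subalgebra containing `G` is `C`. -/
def GeneratesCStar (G : Set C) : Prop :=
  closure (NonUnitalStarAlgebra.adjoin ℂ G : Set C) = Set.univ

/-- A *-representation of `C` on a Hilbert space `H`: a *-homomorphism into `B(H)`. -/
abbrev RepOn (C : Type*) [NonUnitalCStarAlgebra C] (H : Type u) [NormedAddCommGroup H]
    [InnerProductSpace ℂ H] [CompleteSpace H] :=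
  C →⋆ₙₐ[ℂ] (H →L[ℂ] H)

/-- A representation is non-degenerate if `Φ(C)H` is total in `H`. -/
def NondegRep {H : Type u} [NormedAddCommGroup H] [InnerProductSpace ℂ H] [CompleteSpace H]
    (Φ : RepOn C H) : Prop :=
  closure (Submodule.span ℂ {v : H | ∃ c h, Φ c h = v} : Set H) = Set.univ

/-- `G ⊆ C` is ucp hyperrigid. -/
def UCPHyperrigid (G : Set C) : Prop :=
  ∀ (K : HilbertC.{u}) (Φ : RepOn C K), Function.Injective Φ → NondegRep Φ →
    ∀ φ : ℕ → ((K →L[ℂ] K) →ₗ[ℂ] (K →L[ℂ] K)), (∀ n, IsUCPMap (φ n)) →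
      (∀ g ∈ G, Filter.Tendsto (fun n => ‖φ n (Φ g) - Φ g‖) Filter.atTop (nhds 0)) →
      ∀ c : C, Filter.Tendsto (fun n => ‖φ n (Φ c) - Φ c‖) Filter.atTop (nhds 0)

/-- `G ⊆ C` is ccp hyperrigid. -/
def CCPHyperrigid (G : Set C) : Prop :=
  ∀ (K : HilbertC.{u}) (Φ : RepOn C K), Function.Injective Φ → NondegRep Φ →
    ∀ φ : ℕ → ((K →L[ℂ] K) →ₗ[ℂ] (K →L[ℂ] K)), (∀ n, IsCCPMap (φ n)) →
      (∀ g ∈ G, Filter.Tendsto (fun n => ‖φ n (Φ g) - Φ g‖) Filter.atTop (nhds 0)) →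
      ∀ c : C, Filter.Tendsto (fun n => ‖φ n (Φ c) - Φ c‖) Filter.atTop (nhds 0)

/-- `Φ` has the ucp unique extension property with respect to `G`. -/
def HasUCPUep {H : Type u} [NormedAddCommGroup H] [InnerProductSpace ℂ H] [CompleteSpace H]
    (Φ : RepOn C H) (G : Set C) : Prop :=
  ∀ (K : HilbertC.{v}) (j : RepOn C K), Function.Injective j → NondegRep j →
    ∀ Ψ : (K →L[ℂ] K) →ₗ[ℂ] (H →L[ℂ] H), IsUCPMap Ψ →
      (∀ g ∈ G, Ψ (j g) = Φ g) → ∀ c : C, Ψ (j c) = Φ c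

/-- `Φ` has the ccp unique extension property with respect to `G`. -/
def HasCCPUep {H : Type u} [NormedAddCommGroup H] [InnerProductSpace ℂ H] [CompleteSpace H]
    (Φ : RepOn C H) (G : Set C) : Prop :=
  ∀ (K : HilbertC.{v}) (j : RepOn C K), Function.Injective j → NondegRep j →
    ∀ Ψ : (K →L[ℂ] K) →ₗ[ℂ] (H →L[ℂ] H), IsCCPMap Ψ →
      (∀ g ∈ G, Ψ (j g) = Φ g) → ∀ c : C, Ψ (j c) = Φ c

/-- `Φ` is maximal on the subset `Y ⊆ C`: any representation that dilates `Φ` on `Y`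
(with respect to an isometric inclusion `V : H → H'`) has `H` as a reducing subspace and
restricts to `Φ` on `H`. -/
def MaximalOnSet {H : Type u} [NormedAddCommGroup H] [InnerProductSpace ℂ H] [CompleteSpace H]
    (Φ : RepOn C H) (Y : Set C) : Prop :=
  ∀ (K : HilbertC.{v}) (Φ' : RepOn C K) (V : H →ₗᵢ[ℂ] K),
    (∀ y ∈ Y, ∀ h h' : H, (inner ℂ (Φ' y (V h)) (V h') : ℂ) = inner ℂ (Φ y h) h') →
    ∀ c : C, (∀ h, Φ' c (V h) = V (Φ c h)) ∧
      (∀ h, star (Φ' c) (V h) = V (star (Φ c) h))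

/-- `G` is separating for `C`: no nonzero positive contractive functional annihilates `G`. -/
def SeparatingSet (G : Set C) : Prop :=
  ∀ φ : C →ₗ[ℂ] ℂ, IsPosFunctional φ → IsContrFunctional φ →
    (∀ g ∈ G, φ g = 0) → ∀ c : C, φ c = 0

/-- `G` is rigid at zero. -/
def RigidAtZero (G : Set C) : Prop :=
  ∀ φ : ℕ → (C →ₗ[ℂ] ℂ), (∀ n, IsPosFunctional (φ n) ∧ IsContrFunctional (φ n)) →
    (∀ g ∈ G, Filter.Tendsto (fun n => φ n g) Filter.atTop (nhds 0)) →
    ∀ c : C, Filter.Tendsto (fun n => φ n c) Filter.atTop (nhds 0)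

end Defs

/-- For `n ≥ 2` and `xₙ := E₁₁ − Σ_{k=2}^{n} (1/k) E_{kk} ∈ Mₙ(ℂ)`
(written here as a diagonal matrix over `Fin n`, where the index `k : Fin n` corresponds
to the 1-based index `k+1`), there is no positive linear functional `ψ` on `Mₙ(ℂ)` of
norm one with `ψ(xₙ) = −1`. -/
theorem statement3 (n : ℕ) (hn : 2 ≤ n) (x : Matrix (Fin n) (Fin n) ℂ)
    (hx : x = Matrix.diagonal
      (fun k : Fin n => if (k : ℕ) = 0 then (1 : ℂ) else -(((k : ℕ) + 1 : ℂ))⁻¹)) :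
    ¬ ∃ ψ : Matrix (Fin n) (Fin n) ℂ →ₗ[ℂ] ℂ,
        (∀ a : Matrix (Fin n) (Fin n) ℂ, 0 ≤ ψ (star a * a)) ∧
        sSup {r : ℝ | ∃ y : Matrix (Fin n) (Fin n) ℂ, matCNorm y ≤ 1 ∧ r = ‖ψ y‖} = 1 ∧
        ψ x = -1 := by
  rintro ⟨ψ, hpos, hnorm, hψx⟩
  set c : Fin n → ℂ := fun k => if (k : ℕ) = 0 then (1 : ℂ) else -(((k : ℕ) + 1 : ℂ))⁻¹ with hc
  set E : Fin n → Matrix (Fin n) (Fin n) ℂ := fun k => Matrix.single k k 1 with hE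
  -- positivity of ψ (E k)
  have hEpos : ∀ k, 0 ≤ ψ (E k) := by
    intro k
    have h := hpos (E k)
    have : star (E k) * E k = E k := by
      ext i j
      simp [hE, Matrix.star_eq_conjTranspose, Matrix.conjTranspose_apply,
        Matrix.mul_apply, Matrix.single, ite_and, Finset.sum_ite_eq]
      aesop
    rwa [this] at h
  set r : Fin n → ℝ := fun k => (ψ (E k)).re with hr
  have hrpos : ∀ k, 0 ≤ r k := fun k => by
    have := hEpos k; rw [Complex.le_def] at this; exact this.1
  have him : ∀ k, (ψ (E k)).im = 0 := fun k => by
    have := hEpos k; rw [Complex.le_def] at this; simpa using this.2.symm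
  -- 1 = ∑ E k
  have hone : (1 : Matrix (Fin n) (Fin n) ℂ) = ∑ k, E k := by
    ext i j
    by_cases h : i = j <;>
      simp [hE, Matrix.one_apply, Matrix.single, Matrix.sum_apply, h,
        ite_and, Finset.sum_ite_eq]
  -- x = ∑ c k • E k
  have hxsum : x = ∑ k, c k • E k := by
    rw [hx]
    ext i j
    by_cases h : i = j <;>
      simp [hE, Matrix.diagonal_apply, Matrix.single, Matrix.sum_apply,
        Matrix.smul_apply, smul_eq_mul, mul_ite, h, ite_and, Finset.sum_ite_eq]
  -- matCNorm 1 ≤ 1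
  have hC1 : matCNorm (1 : Matrix (Fin n) (Fin n) ℂ) ≤ 1 := by
    apply Real.sSup_le _ zero_le_one
    rintro t ⟨v, hv, rfl⟩
    have hsimp : ∀ i, (∑ j, (1 : Matrix (Fin n) (Fin n) ℂ) i j * v j) = v i := by
      intro i; simp [Matrix.one_apply]
    simp only [hsimp]
    calc Real.sqrt ‖∑ i, star (v i) * v i‖ ≤ Real.sqrt 1 := Real.sqrt_le_sqrt hv
    _ = 1 := Real.sqrt_one
  -- the norm set is bounded above
  set S := {t : ℝ | ∃ y : Matrix (Fin n) (Fin n) ℂ, matCNorm y ≤ 1 ∧ t = ‖ψ y‖} with hS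
  have hbdd : BddAbove S := by
    by_contra h
    rw [Real.sSup_of_not_bddAbove h] at hnorm
    exact one_ne_zero hnorm.symm
  have hψ1 : ‖ψ (1 : Matrix (Fin n) (Fin n) ℂ)‖ ≤ 1 := by
    have hmem : ‖ψ (1 : Matrix (Fin n) (Fin n) ℂ)‖ ∈ S := ⟨1, hC1, rfl⟩
    calc ‖ψ 1‖ ≤ sSup S := le_csSup hbdd hmem
    _ = 1 := hnorm
  -- ∑ r k ≤ 1
  have hsumr : ∑ k, r k ≤ 1 := by
    have h1 : ψ (1 : Matrix (Fin n) (Fin n) ℂ) = ∑ k, ψ (E k) := by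
      rw [hone, map_sum]
    have h2 : (ψ (1 : Matrix (Fin n) (Fin n) ℂ)).re = ∑ k, r k := by
      rw [h1, Complex.re_sum]
    calc ∑ k, r k = (ψ (1 : Matrix (Fin n) (Fin n) ℂ)).re := h2.symm
    _ ≤ ‖ψ 1‖ := Complex.re_le_norm _
    _ ≤ 1 := hψ1
  -- the equation
  have heq : ∑ k, (c k).re * r k = -1 := by
    have h1 : ψ x = ∑ k, c k * ψ (E k) := by
      rw [hxsum, map_sum]; simp [smul_eq_mul]
    have h2 := congrArg Complex.re (h1.symm.trans hψx)
    rw [Complex.re_sum] at h2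
    simp only [Complex.mul_re, him, mul_zero, sub_zero] at h2
    simpa using h2
  -- per-term bound
  have hterm : ∀ k, -(1/2) * r k ≤ (c k).re * r k := by
    intro k
    by_cases h : (k : ℕ) = 0
    · have : (c k).re = 1 := by simp [hc, h]
      rw [this]; nlinarith [hrpos k]
    · have hk1 : (1 : ℕ) ≤ (k : ℕ) := Nat.one_le_iff_ne_zero.mpr h
      have hcast : c k = ((-(((k : ℕ) + 1 : ℝ))⁻¹ : ℝ) : ℂ) := by
        simp [hc, h]
      have hcre : (c k).re = -(((k : ℕ) + 1 : ℝ))⁻¹ := by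
        rw [hcast, Complex.ofReal_re]
      rw [hcre]
      have hk : (1 : ℝ) ≤ ((k : ℕ) : ℝ) := by exact_mod_cast hk1
      have h2 : ((((k : ℕ) : ℝ)) + 1)⁻¹ ≤ 1/2 := by
        rw [inv_le_comm₀ (by linarith) (by norm_num)]
        norm_num; linarith
      nlinarith [hrpos k]
  have : (-1 : ℝ) ≥ -(1/2) := by
    calc (-1 : ℝ) = ∑ k, (c k).re * r k := heq.symm
    _ ≥ ∑ k, -(1/2) * r k := Finset.sum_le_sum (fun k _ => hterm k)
    _ = -(1/2) * ∑ k, r k := by rw [Finset.mul_sum]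
    _ ≥ -(1/2) * 1 := by nlinarith [hsumr, Finset.sum_nonneg (fun k (_ : k ∈ Finset.univ) => hrpos k)]
    _ = -(1/2) := by ring
  linarith
end
end

section
/- Let C be a C*-algebra and let G ⊆ C be a generating set. If every faithful non-degenerate *-representation of C has the ucp (resp. ccp) unique extension property with respect to G, then every non-degenerate *-representation of C has the ucp (resp. ccp) unique extension property with respect to G. -/
open scoped ComplexOrder

noncomputable section

universe u v w

set_option linter.unusedSectionVars false

section Aux

variable {E F : Type u} [NormedAddCommGroup E] [InnerProductSpace ℂ E] [CompleteSpace E]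
  [NormedAddCommGroup F] [InnerProductSpace ℂ F] [CompleteSpace F]

local notation "T2" => WithLp 2 (E × F)

/-- The product of two operators, acting on the Hilbert space product. -/
def opProd (S : E →L[ℂ] E) (R : F →L[ℂ] F) : T2 →L[ℂ] T2 :=
  ((WithLp.prodContinuousLinearEquiv 2 ℂ E F).symm : (E × F) →L[ℂ] T2) ∘L
    (S.prodMap R) ∘L ((WithLp.prodContinuousLinearEquiv 2 ℂ E F) : T2 →L[ℂ] (E × F))

lemma opProd_apply_fst (S : E →L[ℂ] E) (R : F →L[ℂ] F) (x : T2) :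
    (opProd S R x).fst = S x.fst := rfl

lemma opProd_apply_snd (S : E →L[ℂ] E) (R : F →L[ℂ] F) (x : T2) :
    (opProd S R x).snd = R x.snd := rfl

lemma T2_ext {x y : T2} (h1 : x.fst = y.fst) (h2 : x.snd = y.snd) : x = y := by
  exact WithLp.ofLp_injective 2 (Prod.ext h1 h2)

lemma opProd_mul (S S' : E →L[ℂ] E) (R R' : F →L[ℂ] F) :
    opProd S R * opProd S' R' = opProd (S * S') (R * R') := by
  ext x
  rfl

lemma opProd_one : (opProd 1 1 : T2 →L[ℂ] T2) = 1 := by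
  ext x
  rfl

/-- `opProd` as a linear map on the pair. -/
def opProdL : ((E →L[ℂ] E) × (F →L[ℂ] F)) →ₗ[ℂ] (T2 →L[ℂ] T2) where
  toFun p := opProd p.1 p.2
  map_add' p q := by
    refine ContinuousLinearMap.ext fun x => T2_ext ?_ ?_ <;>
      simp [opProd_apply_fst, opProd_apply_snd, ContinuousLinearMap.add_apply]
  map_smul' c p := by
    refine ContinuousLinearMap.ext fun x => T2_ext ?_ ?_ <;>
      simp [opProd_apply_fst, opProd_apply_snd, ContinuousLinearMap.smul_apply]

lemma opProd_add (S S' : E →L[ℂ] E) (R R' : F →L[ℂ] F) :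
    opProd (S + S') (R + R') = opProd S R + opProd S' R' :=
  (opProdL.map_add (S, R) (S', R')).symm ▸ rfl

lemma opProd_star (S : E →L[ℂ] E) (R : F →L[ℂ] F) :
    star (opProd S R) = opProd (star S) (star R) := by
  rw [ContinuousLinearMap.star_eq_adjoint]
  symm
  rw [ContinuousLinearMap.eq_adjoint_iff]
  intro x y
  simp only [WithLp.prod_inner_apply, WithLp.ofLp_fst, WithLp.ofLp_snd, opProd_apply_fst, opProd_apply_snd,
    ContinuousLinearMap.star_eq_adjoint, ContinuousLinearMap.adjoint_inner_left]

end Aux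

section Aux2

variable {C : Type w} [NonUnitalCStarAlgebra C]
variable {E F : Type u} [NormedAddCommGroup E] [InnerProductSpace ℂ E] [CompleteSpace E]
  [NormedAddCommGroup F] [InnerProductSpace ℂ F] [CompleteSpace F]

local notation "T2" => WithLp 2 (E × F)

/-- The direct sum of two representations. -/
def prodRep (Φ : RepOn C E) (Θ : RepOn C F) : RepOn C T2 :=
  { toFun := fun c => opProd (Φ c) (Θ c)
    map_smul' := fun r c => by
      show opProd (Φ (r • c)) (Θ (r • c)) = r • opProd (Φ c) (Θ c)
      rw [map_smul, map_smul]; exact opProdL.map_smul r (Φ c, Θ c)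
    map_zero' := by
      show opProd (Φ 0) (Θ 0) = 0
      rw [map_zero, map_zero]; exact map_zero opProdL
    map_add' := fun a b => by
      show opProd (Φ (a + b)) (Θ (a + b)) = opProd (Φ a) (Θ a) + opProd (Φ b) (Θ b)
      rw [map_add, map_add]; exact opProdL.map_add (Φ a, Θ a) (Φ b, Θ b)
    map_mul' := fun a b => by
      show opProd (Φ (a * b)) (Θ (a * b)) = opProd (Φ a) (Θ a) * opProd (Φ b) (Θ b)
      rw [map_mul, map_mul]; exact (opProd_mul _ _ _ _).symm
    map_star' := fun a => by
      show opProd (Φ (star a)) (Θ (star a)) = star (opProd (Φ a) (Θ a))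
      rw [map_star, map_star]; exact (opProd_star _ _).symm }

lemma prodRep_apply (Φ : RepOn C E) (Θ : RepOn C F) (c : C) :
    prodRep Φ Θ c = opProd (Φ c) (Θ c) := rfl

lemma prodRep_injective (Φ : RepOn C E) (Θ : RepOn C F) (hΘ : Function.Injective Θ) :
    Function.Injective (prodRep Φ Θ) := by
  intro a b hab
  apply hΘ
  ext f
  have := congrArg (fun (S : T2 →L[ℂ] T2) => (S (WithLp.toLp 2 ((0 : E), f))).snd) hab
  simpa [prodRep_apply, opProd_apply_snd] using this

lemma opProd_inj_fst {S S' : E →L[ℂ] E} {R R' : F →L[ℂ] F}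
    (h : opProd S R = opProd S' R') : S = S' := by
  ext e
  have := congrArg (fun (W : T2 →L[ℂ] T2) => (W (WithLp.toLp 2 (e, (0 : F)))).fst) h
  simpa [opProd_apply_fst] using this

lemma prodRep_nondeg (Φ : RepOn C E) (Θ : RepOn C F) (hΦ : NondegRep Φ) (hΘ : NondegRep Θ) :
    NondegRep (prodRep Φ Θ) := by
  classical
  set e := WithLp.prodContinuousLinearEquiv 2 ℂ E F with he
  set M : Submodule ℂ T2 :=
    Submodule.span ℂ {v : T2 | ∃ c h, prodRep Φ Θ c h = v} with hM
  set pE : Submodule ℂ E := Submodule.span ℂ {v : E | ∃ c h, Φ c h = v} with hpE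
  set pF : Submodule ℂ F := Submodule.span ℂ {v : F | ∃ c h, Θ c h = v} with hpF
  have hL1 : ∀ v ∈ pE, e.symm ((v, (0 : F)) : E × F) ∈ M := by
    intro v hv
    have : pE ≤ Submodule.comap
        ((e.symm : (E × F) →L[ℂ] T2).toLinearMap.comp (LinearMap.inl ℂ E F)) M := by
      rw [hpE, Submodule.span_le]
      rintro w ⟨c, h, rfl⟩
      apply Submodule.subset_span
      refine ⟨c, WithLp.toLp 2 (h, (0 : F)), T2_ext rfl ?_⟩
      show Θ c 0 = _
      rw [map_zero]
      rfl
    exact this hv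
  have hL2 : ∀ v ∈ pF, e.symm (((0 : E), v) : E × F) ∈ M := by
    intro v hv
    have : pF ≤ Submodule.comap
        ((e.symm : (E × F) →L[ℂ] T2).toLinearMap.comp (LinearMap.inr ℂ E F)) M := by
      rw [hpF, Submodule.span_le]
      rintro w ⟨c, h, rfl⟩
      apply Submodule.subset_span
      refine ⟨c, WithLp.toLp 2 ((0 : E), h), T2_ext ?_ rfl⟩
      show Φ c 0 = _
      rw [map_zero]
      rfl
    exact this hv
  have hsub : ⇑e.symm '' ((pE : Set E) ×ˢ (pF : Set F)) ⊆ (M : Set T2) := by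
    rintro - ⟨⟨a, b⟩, ⟨ha, hb⟩, rfl⟩
    have hab : e.symm ((a, b) : E × F)
        = e.symm ((a, (0 : F)) : E × F) + e.symm (((0 : E), b) : E × F) := by
      rw [← map_add]
      norm_num
    rw [hab]
    exact M.add_mem (hL1 a ha) (hL2 b hb)
  have hclose : closure (⇑e.symm '' ((pE : Set E) ×ˢ (pF : Set F))) = Set.univ := by
    rw [← ContinuousLinearEquiv.image_closure, closure_prod_eq, hpE, hpF, hΦ, hΘ, Set.univ_prod_univ,
      Set.image_univ, e.symm.surjective.range_eq]
  refine Set.eq_univ_of_univ_subset ?_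
  rw [← hclose]
  exact closure_mono hsub

end Aux2

section Aux3

variable {E F : Type u} [NormedAddCommGroup E] [InnerProductSpace ℂ E] [CompleteSpace E]
  [NormedAddCommGroup F] [InnerProductSpace ℂ F] [CompleteSpace F]

local notation "T2" => WithLp 2 (E × F)

/-- Extension of a map `B(F) → B(E)` to a map `B(F) → B(E ⊕ F)`, `S ↦ Ψ(S) ⊕ S`. -/
def extMap (Ψ : (F →L[ℂ] F) →ₗ[ℂ] (E →L[ℂ] E)) :
    (F →L[ℂ] F) →ₗ[ℂ] (T2 →L[ℂ] T2) :=
  opProdL.comp (Ψ.prod LinearMap.id)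

lemma extMap_apply (Ψ : (F →L[ℂ] F) →ₗ[ℂ] (E →L[ℂ] E)) (S : F →L[ℂ] F) :
    extMap Ψ S = opProd (Ψ S) S := rfl

lemma extMap_cp {Ψ : (F →L[ℂ] F) →ₗ[ℂ] (E →L[ℂ] E)} (hΨ : IsCPMap Ψ) :
    IsCPMap (extMap Ψ) := by
  intro n x hx
  obtain ⟨z, hz⟩ := hΨ n x hx
  obtain ⟨y, hy⟩ := hx
  refine ⟨Matrix.of fun i j => opProd (z i j) (y i j), ?_⟩
  ext i j
  rw [Matrix.map_apply, extMap_apply, Matrix.mul_apply]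
  have : ∀ k, (star (Matrix.of fun i j => opProd (z i j) (y i j))) i k *
      (Matrix.of fun i j => opProd (z i j) (y i j)) k j
      = opProdL (star (z k i) * z k j, star (y k i) * y k j) := by
    intro k
    rw [Matrix.star_apply, Matrix.of_apply, Matrix.of_apply, opProd_star, opProd_mul]
    rfl
  rw [Finset.sum_congr rfl fun k _ => this k, ← map_sum]
  have h1 : (∑ k, (star (z k i) * z k j, star (y k i) * y k j) :
      (E →L[ℂ] E) × (F →L[ℂ] F))
      = ((star z * z) i j, (star y * y) i j) := by
    rw [Prod.ext_iff]
    constructor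
    · rw [Prod.fst_sum, Matrix.mul_apply]
      exact Finset.sum_congr rfl fun k _ => by simp [Matrix.star_apply]
    · rw [Prod.snd_sum, Matrix.mul_apply]
      exact Finset.sum_congr rfl fun k _ => by simp [Matrix.star_apply]
  rw [h1, ← hz, ← hy, Matrix.map_apply]
  rfl

lemma extMap_one (Ψ : (F →L[ℂ] F) →ₗ[ℂ] (E →L[ℂ] E)) (h1 : Ψ 1 = 1) :
    extMap Ψ 1 = 1 := by
  rw [extMap_apply, h1, opProd_one]

lemma extMap_ucp {Ψ : (F →L[ℂ] F) →ₗ[ℂ] (E →L[ℂ] E)} (hΨ : IsUCPMap Ψ) :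
    IsUCPMap (extMap Ψ) :=
  ⟨extMap_cp hΨ.1, extMap_one Ψ hΨ.2⟩

end Aux3

section Aux4

/-- Completeness of finite `ℓ²`-powers. -/
instance PiLp2CompleteSpace {ι : Type v} [Fintype ι] {β : ι → Type u}
    [∀ i, NormedAddCommGroup (β i)] [∀ i, InnerProductSpace ℂ (β i)]
    [∀ i, CompleteSpace (β i)] :
    CompleteSpace (PiLp 2 β) := by
  have e := PiLp.continuousLinearEquiv 2 ℂ β
  exact (completeSpace_congr (e := e.toLinearEquiv.toEquiv) e.isUniformEmbedding).mpr inferInstance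

set_option synthInstance.maxHeartbeats 1000000
set_option maxHeartbeats 1000000

variable {E : Type u} [NormedAddCommGroup E] [InnerProductSpace ℂ E] [CompleteSpace E]
variable {n : ℕ}

/-- Column operator `ξ ↦ (v i ξ)ᵢ`. -/
def colOp (v : Fin n → (E →L[ℂ] E)) : E →L[ℂ] PiLp 2 (fun _ : Fin n => E) :=
  ((PiLp.continuousLinearEquiv 2 ℂ (fun _ : Fin n => E)).symm :
      (∀ _ : Fin n, E) →L[ℂ] PiLp 2 (fun _ : Fin n => E)) ∘L ContinuousLinearMap.pi v

lemma colOp_apply (v : Fin n → (E →L[ℂ] E)) (ξ : E) (i : Fin n) :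
    colOp v ξ i = v i ξ := rfl

/-- A matrix of operators acting on the `ℓ²`-power. -/
def matOp (x : Matrix (Fin n) (Fin n) (E →L[ℂ] E)) :
    PiLp 2 (fun _ : Fin n => E) →L[ℂ] PiLp 2 (fun _ : Fin n => E) :=
  ((PiLp.continuousLinearEquiv 2 ℂ (fun _ : Fin n => E)).symm :
      (∀ _ : Fin n, E) →L[ℂ] PiLp 2 (fun _ : Fin n => E)) ∘L
    (ContinuousLinearMap.pi fun i => ∑ j, (x i j) ∘L
      (ContinuousLinearMap.proj (R := ℂ) (φ := fun _ : Fin n => E) j)) ∘L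
    ((PiLp.continuousLinearEquiv 2 ℂ (fun _ : Fin n => E)) :
      PiLp 2 (fun _ : Fin n => E) →L[ℂ] (∀ _ : Fin n, E))

lemma matOp_apply (x : Matrix (Fin n) (Fin n) (E →L[ℂ] E))
    (u : PiLp 2 (fun _ : Fin n => E)) (i : Fin n) :
    matOp x u i = ∑ j, x i j (u j) := by
  show (∑ j, (x i j) ∘L (ContinuousLinearMap.proj (R := ℂ) (φ := fun _ : Fin n => E) j))
      ((PiLp.continuousLinearEquiv 2 ℂ _) u) = _
  rw [ContinuousLinearMap.sum_apply]
  rfl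

lemma adj_colOp_comp (v : Fin n → (E →L[ℂ] E)) :
    ContinuousLinearMap.adjoint (colOp v) ∘L colOp v = ∑ i, star (v i) * v i := by
  refine ContinuousLinearMap.ext fun ξ => ?_
  refine ext_inner_right ℂ fun η => ?_
  rw [ContinuousLinearMap.comp_apply, ContinuousLinearMap.adjoint_inner_left,
    PiLp.inner_apply]
  rw [ContinuousLinearMap.sum_apply, sum_inner]
  refine Finset.sum_congr rfl fun i _ => ?_
  rw [colOp_apply, colOp_apply, ContinuousLinearMap.mul_apply,
    ContinuousLinearMap.star_eq_adjoint, ContinuousLinearMap.adjoint_inner_left]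

lemma norm_sum_star_mul (v : Fin n → (E →L[ℂ] E)) :
    ‖∑ i, star (v i) * v i‖ = ‖colOp v‖ ^ 2 := by
  rw [← adj_colOp_comp, ContinuousLinearMap.norm_adjoint_comp_self, sq]

lemma colOp_mul (x : Matrix (Fin n) (Fin n) (E →L[ℂ] E)) (v : Fin n → (E →L[ℂ] E)) :
    colOp (fun i => ∑ j, x i j * v j) = matOp x ∘L colOp v := by
  refine ContinuousLinearMap.ext fun ξ => PiLp.ext fun i => ?_
  rw [colOp_apply, ContinuousLinearMap.comp_apply, matOp_apply, ContinuousLinearMap.sum_apply]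
  refine Finset.sum_congr rfl fun j _ => ?_
  rw [colOp_apply, ContinuousLinearMap.mul_apply]

lemma colOp_surj (V : E →L[ℂ] PiLp 2 (fun _ : Fin n => E)) :
    colOp (fun i => (ContinuousLinearMap.proj (R := ℂ) (φ := fun _ : Fin n => E) i) ∘L
      (((PiLp.continuousLinearEquiv 2 ℂ (fun _ : Fin n => E)) :
        PiLp 2 (fun _ : Fin n => E) →L[ℂ] (∀ _ : Fin n, E)) ∘L V)) = V := by
  refine ContinuousLinearMap.ext fun ξ => PiLp.ext fun i => ?_
  rfl

lemma matCNorm_eq_norm_matOp (x : Matrix (Fin n) (Fin n) (E →L[ℂ] E)) :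
    matCNorm x = ‖matOp x‖ := by
  have hmem : ∀ v : Fin n → (E →L[ℂ] E), ‖∑ i, star (v i) * v i‖ ≤ 1 →
      Real.sqrt ‖∑ i, star (∑ j, x i j * v j) * (∑ j, x i j * v j)‖
        = ‖matOp x ∘L colOp v‖ := by
    intro v _
    rw [norm_sum_star_mul, colOp_mul]
    exact Real.sqrt_sq (ContinuousLinearMap.opNorm_nonneg _)
  have h0 : (0 : ℝ) ∈ {r : ℝ | ∃ v : Fin n → (E →L[ℂ] E), ‖∑ i, star (v i) * v i‖ ≤ 1 ∧
      r = Real.sqrt ‖∑ i, star (∑ j, x i j * v j) * (∑ j, x i j * v j)‖} := by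
    refine ⟨0, by simp, ?_⟩
    simp
  have hub : ∀ r ∈ {r : ℝ | ∃ v : Fin n → (E →L[ℂ] E), ‖∑ i, star (v i) * v i‖ ≤ 1 ∧
      r = Real.sqrt ‖∑ i, star (∑ j, x i j * v j) * (∑ j, x i j * v j)‖},
      r ≤ ‖matOp x‖ := by
    rintro r ⟨v, hv, rfl⟩
    rw [hmem v hv]
    have hc : ‖colOp v‖ ≤ 1 := by
      rw [norm_sum_star_mul] at hv
      exact (pow_le_one_iff_of_nonneg (ContinuousLinearMap.opNorm_nonneg _) two_ne_zero).mp hv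
    calc ‖matOp x ∘L colOp v‖ ≤ ‖matOp x‖ * ‖colOp v‖ := ContinuousLinearMap.opNorm_comp_le _ _
      _ ≤ ‖matOp x‖ * 1 := by
          exact mul_le_mul_of_nonneg_left hc (ContinuousLinearMap.opNorm_nonneg _)
      _ = ‖matOp x‖ := mul_one _
  have hbdd : BddAbove {r : ℝ | ∃ v : Fin n → (E →L[ℂ] E), ‖∑ i, star (v i) * v i‖ ≤ 1 ∧
      r = Real.sqrt ‖∑ i, star (∑ j, x i j * v j) * (∑ j, x i j * v j)‖} := ⟨_, hub⟩
  refine le_antisymm (csSup_le ⟨0, h0⟩ hub) ?_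
  have hS0 : 0 ≤ matCNorm x := le_csSup hbdd h0
  refine ContinuousLinearMap.opNorm_le_bound _ hS0 fun u => ?_
  by_cases hu : u = 0
  · simp [hu]
  · have hune : ∃ i0, u i0 ≠ 0 := by
      by_contra hne
      push_neg at hne
      exact hu (PiLp.ext fun i => hne i)
    obtain ⟨i0, hi0⟩ := hune
    set ξ₀ : E := ‖u i0‖⁻¹ • u i0 with hξ₀
    have hξnorm : ‖ξ₀‖ = 1 := by
      rw [hξ₀, norm_smul, norm_inv, norm_norm, inv_mul_cancel₀ (norm_ne_zero_iff.mpr hi0)]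
    set V : E →L[ℂ] PiLp 2 (fun _ : Fin n => E) :=
      (innerSL ℂ ξ₀).smulRight (‖u‖⁻¹ • u) with hV
    have hVnorm : ‖V‖ ≤ 1 := by
      rw [hV, ContinuousLinearMap.norm_smulRight_apply, innerSL_apply_norm, hξnorm, one_mul,
        norm_smul, norm_inv, norm_norm, inv_mul_cancel₀ (norm_ne_zero_iff.mpr hu)]
    have hVmem : ‖matOp x ∘L V‖ ∈ {r : ℝ | ∃ v : Fin n → (E →L[ℂ] E),
        ‖∑ i, star (v i) * v i‖ ≤ 1 ∧
        r = Real.sqrt ‖∑ i, star (∑ j, x i j * v j) * (∑ j, x i j * v j)‖} := by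
      set v : Fin n → (E →L[ℂ] E) := fun i =>
        (ContinuousLinearMap.proj (R := ℂ) (φ := fun _ : Fin n => E) i) ∘L
          (((PiLp.continuousLinearEquiv 2 ℂ (fun _ : Fin n => E)) :
            PiLp 2 (fun _ : Fin n => E) →L[ℂ] (∀ _ : Fin n, E)) ∘L V) with hv
      have hcv : colOp v = V := colOp_surj V
      have h1 : ‖∑ i, star (v i) * v i‖ ≤ 1 := by
        rw [norm_sum_star_mul, hcv]
        exact pow_le_one₀ (ContinuousLinearMap.opNorm_nonneg _) hVnorm
      exact ⟨v, h1, by rw [hmem v h1, hcv]⟩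
    have hVx : V ξ₀ = ‖u‖⁻¹ • u := by
      rw [hV]
      show (inner ℂ ξ₀ ξ₀ : ℂ) • (‖u‖⁻¹ • u) = ‖u‖⁻¹ • u
      rw [inner_self_eq_norm_sq_to_K, hξnorm]
      norm_num
    have key : ‖matOp x u‖ ≤ ‖matOp x ∘L V‖ * ‖u‖ := by
      have h2 : ‖(matOp x ∘L V) ξ₀‖ ≤ ‖matOp x ∘L V‖ := by
        calc ‖(matOp x ∘L V) ξ₀‖ ≤ ‖matOp x ∘L V‖ * ‖ξ₀‖ :=
            ContinuousLinearMap.le_opNorm _ _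
          _ = ‖matOp x ∘L V‖ := by rw [hξnorm, mul_one]
      rw [ContinuousLinearMap.comp_apply, hVx, ContinuousLinearMap.map_smul_of_tower, norm_smul, norm_inv, norm_norm] at h2
      have hupos : (0 : ℝ) < ‖u‖ := norm_pos_iff.mpr hu
      calc ‖matOp x u‖ = (‖u‖⁻¹ * ‖matOp x u‖) * ‖u‖ := by
            field_simp
          _ ≤ ‖matOp x ∘L V‖ * ‖u‖ := mul_le_mul_of_nonneg_right h2 (le_of_lt hupos)
    exact key.trans (mul_le_mul_of_nonneg_right (le_csSup hbdd hVmem) (norm_nonneg _))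

end Aux4

section Aux5

set_option synthInstance.maxHeartbeats 1000000
set_option maxHeartbeats 1000000

variable {E F : Type u} [NormedAddCommGroup E] [InnerProductSpace ℂ E] [CompleteSpace E]
  [NormedAddCommGroup F] [InnerProductSpace ℂ F] [CompleteSpace F]

local notation "T2" => WithLp 2 (E × F)

/-- `fst` as an additive monoid hom on the Hilbert space product. -/
def fstAM : T2 →+ E := AddMonoidHom.mk' (fun z => z.fst) (fun _ _ => rfl)

/-- `snd` as an additive monoid hom on the Hilbert space product. -/
def sndAM : T2 →+ F := AddMonoidHom.mk' (fun z => z.snd) (fun _ _ => rfl)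

lemma matOp_block_norm_le {n : ℕ} (A : Matrix (Fin n) (Fin n) (E →L[ℂ] E))
    (B : Matrix (Fin n) (Fin n) (F →L[ℂ] F))
    (M : Matrix (Fin n) (Fin n) (T2 →L[ℂ] T2))
    (hM : ∀ i j, M i j = opProd (A i j) (B i j)) :
    ‖matOp M‖ ≤ max ‖matOp A‖ ‖matOp B‖ := by
  have hmax0 : (0 : ℝ) ≤ max ‖matOp A‖ ‖matOp B‖ :=
    (ContinuousLinearMap.opNorm_nonneg _).trans (le_max_left _ _)
  refine ContinuousLinearMap.opNorm_le_bound _ hmax0 fun u => ?_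
  set u1 : PiLp 2 (fun _ : Fin n => E) :=
    (WithLp.equiv 2 (∀ _ : Fin n, E)).symm (fun i => (u i).fst) with hu1
  set u2 : PiLp 2 (fun _ : Fin n => F) :=
    (WithLp.equiv 2 (∀ _ : Fin n, F)).symm (fun i => (u i).snd) with hu2
  have hfst : ∀ i, (matOp M u i).fst = matOp A u1 i := by
    intro i
    rw [matOp_apply, matOp_apply]
    rw [show (∑ j, M i j (u j)).fst = fstAM (∑ j, M i j (u j)) from rfl, map_sum]
    refine Finset.sum_congr rfl fun j _ => ?_
    rw [show fstAM (M i j (u j)) = (M i j (u j)).fst from rfl, hM i j, opProd_apply_fst]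
    rfl
  have hsnd : ∀ i, (matOp M u i).snd = matOp B u2 i := by
    intro i
    rw [matOp_apply, matOp_apply]
    rw [show (∑ j, M i j (u j)).snd = sndAM (∑ j, M i j (u j)) from rfl, map_sum]
    refine Finset.sum_congr rfl fun j _ => ?_
    rw [show sndAM (M i j (u j)) = (M i j (u j)).snd from rfl, hM i j, opProd_apply_snd]
    rfl
  have hnormMu : ‖matOp M u‖ ^ 2 = ‖matOp A u1‖ ^ 2 + ‖matOp B u2‖ ^ 2 := by
    rw [PiLp.norm_sq_eq_of_L2, PiLp.norm_sq_eq_of_L2, PiLp.norm_sq_eq_of_L2,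
      ← Finset.sum_add_distrib]
    refine Finset.sum_congr rfl fun i _ => ?_
    rw [WithLp.prod_norm_sq_eq_of_L2, hfst i, hsnd i]
  have hnormu : ‖u‖ ^ 2 = ‖u1‖ ^ 2 + ‖u2‖ ^ 2 := by
    rw [PiLp.norm_sq_eq_of_L2, PiLp.norm_sq_eq_of_L2, PiLp.norm_sq_eq_of_L2,
      ← Finset.sum_add_distrib]
    refine Finset.sum_congr rfl fun i _ => ?_
    rw [WithLp.prod_norm_sq_eq_of_L2]
    rfl
  have hsq : ‖matOp M u‖ ^ 2 ≤ (max ‖matOp A‖ ‖matOp B‖ * ‖u‖) ^ 2 := by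
    rw [hnormMu, mul_pow, hnormu, mul_add]
    have h1 : ‖matOp A u1‖ ^ 2 ≤ max ‖matOp A‖ ‖matOp B‖ ^ 2 * ‖u1‖ ^ 2 := by
      rw [← mul_pow]
      have := (ContinuousLinearMap.le_opNorm (matOp A) u1).trans
        (mul_le_mul_of_nonneg_right (le_max_left ‖matOp A‖ ‖matOp B‖) (norm_nonneg u1))
      exact pow_le_pow_left₀ (norm_nonneg _) this 2
    have h2 : ‖matOp B u2‖ ^ 2 ≤ max ‖matOp A‖ ‖matOp B‖ ^ 2 * ‖u2‖ ^ 2 := by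
      rw [← mul_pow]
      have := (ContinuousLinearMap.le_opNorm (matOp B) u2).trans
        (mul_le_mul_of_nonneg_right (le_max_right ‖matOp A‖ ‖matOp B‖) (norm_nonneg u2))
      exact pow_le_pow_left₀ (norm_nonneg _) this 2
    exact add_le_add h1 h2
  have := Real.sqrt_le_sqrt hsq
  rwa [Real.sqrt_sq (norm_nonneg _), Real.sqrt_sq (mul_nonneg hmax0 (norm_nonneg _))] at this

lemma extMap_ccp {Ψ : (F →L[ℂ] F) →ₗ[ℂ] (E →L[ℂ] E)} (hΨ : IsCCPMap Ψ) :
    IsCCPMap (extMap Ψ) := by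
  refine ⟨extMap_cp hΨ.1, fun n x => ?_⟩
  rw [matCNorm_eq_norm_matOp, matCNorm_eq_norm_matOp]
  have hblock : ‖matOp (x.map ⇑(extMap Ψ))‖ ≤ max ‖matOp (x.map ⇑Ψ)‖ ‖matOp x‖ := by
    refine matOp_block_norm_le (x.map ⇑Ψ) x _ fun i j => ?_
    rw [Matrix.map_apply, Matrix.map_apply, extMap_apply]
  refine hblock.trans (max_le ?_ le_rfl)
  have := hΨ.2 n x
  rwa [matCNorm_eq_norm_matOp, matCNorm_eq_norm_matOp] at this

end Aux5


/-- If every faithful non-degenerate *-representation of `C` has the ucp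
(resp. ccp) unique extension property with respect to a generating set `G`, then every
non-degenerate *-representation of `C` has the ucp (resp. ccp) unique extension property
with respect to `G`. -/
theorem statement5 {C : Type w} [NonUnitalCStarAlgebra C] (G : Set C)
    (hG : GeneratesCStar G) :
    ((∀ (H : HilbertC.{u}) (Φ : RepOn C H.carrier), Function.Injective Φ → NondegRep Φ →
        HasUCPUep.{u, u, w} Φ G) →
      ∀ (H : HilbertC.{u}) (Φ : RepOn C H.carrier), NondegRep Φ → HasUCPUep.{u, u, w} Φ G)
    ∧
    ((∀ (H : HilbertC.{u}) (Φ : RepOn C H.carrier), Function.Injective Φ → NondegRep Φ →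
        HasCCPUep.{u, u, w} Φ G) →
      ∀ (H : HilbertC.{u}) (Φ : RepOn C H.carrier), NondegRep Φ → HasCCPUep.{u, u, w} Φ G) := by
  refine ⟨?_, ?_⟩
  · intro hFaith H Φ hΦnd K j hjinj hjnd Ψ hΨ hagree c
    have key := hFaith ⟨WithLp 2 (H.carrier × K.carrier)⟩ (prodRep Φ j)
      (prodRep_injective Φ j hjinj) (prodRep_nondeg Φ j hΦnd hjnd) K j hjinj hjnd
      (extMap Ψ) (extMap_ucp hΨ)
      (fun g hg => by rw [extMap_apply, prodRep_apply, hagree g hg]) c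
    rw [extMap_apply, prodRep_apply] at key
    exact opProd_inj_fst key
  · intro hFaith H Φ hΦnd K j hjinj hjnd Ψ hΨ hagree c
    have key := hFaith ⟨WithLp 2 (H.carrier × K.carrier)⟩ (prodRep Φ j)
      (prodRep_injective Φ j hjinj) (prodRep_nondeg Φ j hΦnd hjnd) K j hjinj hjnd
      (extMap Ψ) (extMap_ccp hΨ)
      (fun g hg => by rw [extMap_apply, prodRep_apply, hagree g hg]) c
    rw [extMap_apply, prodRep_apply] at key
    exact opProd_inj_fst key
end
end

section
/- Let C be a C*-algebra and let G ⊆ C be a generating set. If G is ucp hyperrigid (resp. ccp hyperrigid), then every non-degenerate *-representation of C has the ucp (resp. ccp) unique extension property with respect to G. -/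
open scoped ComplexOrder

noncomputable section

universe u v w

noncomputable section
set_option linter.unusedSectionVars false
set_option maxHeartbeats 4000000
set_option synthInstance.maxHeartbeats 400000
namespace S6

open ContinuousLinearMap

variable {E E₁ E₂ E₃ : Type*}
  [NormedAddCommGroup E] [InnerProductSpace ℂ E] [CompleteSpace E]
  [NormedAddCommGroup E₁] [InnerProductSpace ℂ E₁] [CompleteSpace E₁]
  [NormedAddCommGroup E₂] [InnerProductSpace ℂ E₂] [CompleteSpace E₂]
  [NormedAddCommGroup E₃] [InnerProductSpace ℂ E₃] [CompleteSpace E₃]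
  {n : ℕ}

abbrev Hn (E : Type*) [NormedAddCommGroup E] [InnerProductSpace ℂ E] (n : ℕ) :=
  PiLp 2 (fun _ : Fin n => E)

instance (priority := 900) : CompleteSpace (Hn E n) :=
  (ContinuousLinearEquiv.isUniformEmbedding
    (PiLp.continuousLinearEquiv 2 ℂ (fun _ : Fin n => E))).isUniformInducing.completeSpace_congr
    (PiLp.continuousLinearEquiv 2 ℂ (fun _ : Fin n => E)).surjective |>.mpr inferInstance

/-- Evaluation at a coordinate, as a continuous linear map. -/
def evalk (k : Fin n) : Hn E n →L[ℂ] E :=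
  (ContinuousLinearMap.proj k) ∘L
    (PiLp.continuousLinearEquiv 2 ℂ (fun _ : Fin n => E)).toContinuousLinearMap

@[simp] lemma evalk_apply (k : Fin n) (v : Hn E n) : evalk k v = v k := rfl

lemma apply_sum {ι : Type*} (s : Finset ι) (f : ι → Hn E n) (k : Fin n) :
    (∑ j ∈ s, f j) k = ∑ j ∈ s, f j k := by
  calc (∑ j ∈ s, f j) k = evalk k (∑ j ∈ s, f j) := rfl
    _ = ∑ j ∈ s, evalk k (f j) := map_sum _ _ _
    _ = ∑ j ∈ s, f j k := rfl

/-- Coordinate inclusion, as a continuous linear map. -/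
def inclk (k : Fin n) : E →L[ℂ] Hn E n :=
  (PiLp.continuousLinearEquiv 2 ℂ (fun _ : Fin n => E)).symm.toContinuousLinearMap ∘L
    (ContinuousLinearMap.pi fun i => if i = k then ContinuousLinearMap.id ℂ E else 0)

lemma inclk_apply (k : Fin n) (e : E) (i : Fin n) :
    inclk k e i = if i = k then e else 0 := by
  have : inclk k e i = (if i = k then ContinuousLinearMap.id ℂ E else 0) e := rfl
  rw [this]
  split <;> rfl

def pimap (n : ℕ) (u : E₁ →L[ℂ] E₂) : Hn E₁ n →L[ℂ] Hn E₂ n :=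
  (PiLp.continuousLinearEquiv 2 ℂ _).symm.toContinuousLinearMap ∘L
    (ContinuousLinearMap.pi fun i => u ∘L
      ((ContinuousLinearMap.proj i) ∘L (PiLp.continuousLinearEquiv 2 ℂ _).toContinuousLinearMap))

@[simp] lemma pimap_apply (u : E₁ →L[ℂ] E₂) (v : Hn E₁ n) (i : Fin n) :
    pimap n u v i = u (v i) := rfl

lemma pimap_comp (u : E₂ →L[ℂ] E₃) (w : E₁ →L[ℂ] E₂) :
    pimap n (u ∘L w) = pimap n u ∘L pimap n w := by ext v i; rfl

lemma pimap_id : pimap n (ContinuousLinearMap.id ℂ E) = ContinuousLinearMap.id ℂ (Hn E n) := by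
  ext v i; rfl

lemma pimap_add (u w : E₁ →L[ℂ] E₂) : pimap n (u + w) = pimap n u + pimap n w := by
  ext v i
  have : (pimap n u + pimap n w) v i = pimap n u v i + pimap n w v i := rfl
  rw [this]; simp

lemma pimap_zero : pimap n (0 : E₁ →L[ℂ] E₂) = 0 := by ext v i; rfl

lemma pimap_adjoint (u : E₁ →L[ℂ] E₂) :
    ContinuousLinearMap.adjoint (pimap n u) = pimap n (ContinuousLinearMap.adjoint u) := by
  symm
  rw [ContinuousLinearMap.eq_adjoint_iff]
  intro v w
  simp only [PiLp.inner_apply, pimap_apply]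
  exact Finset.sum_congr rfl fun i _ => ContinuousLinearMap.adjoint_inner_left u _ _

lemma norm_pimap_apply (u : E₁ →L[ℂ] E₂)
    (h : ContinuousLinearMap.adjoint u ∘L u = ContinuousLinearMap.id ℂ E₁) (v : Hn E₁ n) :
    ‖pimap n u v‖ = ‖v‖ := by
  have key : (inner ℂ (pimap n u v) (pimap n u v) : ℂ) = inner ℂ v v := by
    rw [← ContinuousLinearMap.adjoint_inner_right, ← ContinuousLinearMap.comp_apply,
      pimap_adjoint, ← pimap_comp, h, pimap_id]
    rfl
  have h1 := norm_eq_sqrt_re_inner (𝕜 := ℂ) (pimap n u v)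
  have h2 := norm_eq_sqrt_re_inner (𝕜 := ℂ) v
  rw [h1, h2, key]

def matToOp (x : Matrix (Fin n) (Fin n) (E →L[ℂ] E)) : Hn E n →L[ℂ] Hn E n :=
  (PiLp.continuousLinearEquiv 2 ℂ _).symm.toContinuousLinearMap ∘L
    (ContinuousLinearMap.pi fun i => ∑ j, (x i j) ∘L
      ((ContinuousLinearMap.proj j) ∘L (PiLp.continuousLinearEquiv 2 ℂ _).toContinuousLinearMap))

lemma matToOp_apply (x : Matrix (Fin n) (Fin n) (E →L[ℂ] E)) (v : Hn E n) (i : Fin n) :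
    matToOp x v i = ∑ j, x i j (v j) := by
  simp [matToOp, ContinuousLinearMap.pi, ContinuousLinearMap.sum_apply]

lemma matToOp_add (x y : Matrix (Fin n) (Fin n) (E →L[ℂ] E)) :
    matToOp (x + y) = matToOp x + matToOp y := by
  ext v i
  have : (matToOp x + matToOp y) v i = matToOp x v i + matToOp y v i := rfl
  rw [this, matToOp_apply, matToOp_apply, matToOp_apply, ← Finset.sum_add_distrib]
  exact Finset.sum_congr rfl fun j _ => by rw [Matrix.add_apply, ContinuousLinearMap.add_apply]

lemma matToOp_mul (x y : Matrix (Fin n) (Fin n) (E →L[ℂ] E)) :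
    matToOp (x * y) = matToOp x ∘L matToOp y := by
  ext v i
  simp only [ContinuousLinearMap.comp_apply, matToOp_apply, Matrix.mul_apply,
    ContinuousLinearMap.sum_apply, ContinuousLinearMap.mul_apply, map_sum]
  rw [Finset.sum_comm]

lemma matToOp_star (x : Matrix (Fin n) (Fin n) (E →L[ℂ] E)) :
    matToOp (star x) = ContinuousLinearMap.adjoint (matToOp x) := by
  rw [ContinuousLinearMap.eq_adjoint_iff]
  intro v w
  simp only [PiLp.inner_apply, matToOp_apply, sum_inner, inner_sum]
  rw [Finset.sum_comm]
  refine Finset.sum_congr rfl fun i _ => Finset.sum_congr rfl fun j _ => ?_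
  have hst : (star x) j i = ContinuousLinearMap.adjoint (x i j) := by
    simp [Matrix.star_apply, ContinuousLinearMap.star_eq_adjoint]
  rw [hst, ContinuousLinearMap.adjoint_inner_left]

def opToMat (T : Hn E n →L[ℂ] Hn E n) : Matrix (Fin n) (Fin n) (E →L[ℂ] E) :=
  fun i j => evalk i ∘L T ∘L inclk j

lemma sum_inclk (v : Hn E n) : (∑ j, inclk j (v j)) = v := by
  refine PiLp.ext fun k => ?_
  rw [apply_sum]
  have : ∀ j, inclk j (v j) k = if k = j then v j else 0 := fun j => inclk_apply j (v j) k
  simp only [this]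
  simp

lemma matToOp_opToMat (T : Hn E n →L[ℂ] Hn E n) : matToOp (opToMat T) = T := by
  ext v i
  rw [matToOp_apply]
  have : ∀ j, opToMat T i j (v j) = evalk i (T (inclk j (v j))) := fun j => rfl
  simp only [this]
  rw [show (∑ x, evalk i (T (inclk x (v x)))) = evalk i (T (∑ x, inclk x (v x))) by
    rw [map_sum T, map_sum (evalk i)], sum_inclk]
  rfl

lemma opToMat_matToOp (x : Matrix (Fin n) (Fin n) (E →L[ℂ] E)) : opToMat (matToOp x) = x := by
  funext i j
  ext e
  have : opToMat (matToOp x) i j e = matToOp x (inclk j e) i := rfl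
  rw [this, matToOp_apply]
  have h2 : ∀ k, x i k (inclk j e k) = if k = j then x i j e else 0 := by
    intro k
    rw [inclk_apply]
    by_cases h : k = j <;> simp [h]
  simp only [h2]
  simp

lemma matToOp_injective : Function.Injective (matToOp (E := E) (n := n)) := by
  intro x y h
  rw [← opToMat_matToOp x, ← opToMat_matToOp y, h]

end S6

namespace S6
open ContinuousLinearMap

variable {E : Type*} [NormedAddCommGroup E] [InnerProductSpace ℂ E] [CompleteSpace E] {n : ℕ}

def vecToOp (v : Fin n → (E →L[ℂ] E)) : E →L[ℂ] Hn E n :=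
  (PiLp.continuousLinearEquiv 2 ℂ _).symm.toContinuousLinearMap ∘L
    (ContinuousLinearMap.pi fun i => v i)

@[simp] lemma vecToOp_apply (v : Fin n → (E →L[ℂ] E)) (e : E) (i : Fin n) :
    vecToOp v e i = v i e := rfl

lemma adjoint_vecToOp (v : Fin n → (E →L[ℂ] E)) :
    ContinuousLinearMap.adjoint (vecToOp v) =
      ∑ i, (ContinuousLinearMap.adjoint (v i)) ∘L evalk i := by
  symm
  rw [ContinuousLinearMap.eq_adjoint_iff]
  intro w e
  simp only [ContinuousLinearMap.sum_apply, ContinuousLinearMap.comp_apply, evalk_apply,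
    sum_inner, PiLp.inner_apply, vecToOp_apply]
  exact Finset.sum_congr rfl fun i _ => ContinuousLinearMap.adjoint_inner_left _ _ _

lemma adjoint_comp_vecToOp (v : Fin n → (E →L[ℂ] E)) :
    ContinuousLinearMap.adjoint (vecToOp v) ∘L vecToOp v = ∑ i, star (v i) * v i := by
  rw [adjoint_vecToOp]
  ext e
  simp [ContinuousLinearMap.sum_apply, ContinuousLinearMap.mul_apply,
    ContinuousLinearMap.star_eq_adjoint]

lemma norm_sum_star_mul (v : Fin n → (E →L[ℂ] E)) :
    ‖∑ i, star (v i) * v i‖ = ‖vecToOp v‖ * ‖vecToOp v‖ := by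
  rw [← adjoint_comp_vecToOp, ContinuousLinearMap.norm_adjoint_comp_self]

lemma vecToOp_matVec (x : Matrix (Fin n) (Fin n) (E →L[ℂ] E)) (v : Fin n → (E →L[ℂ] E)) :
    vecToOp (fun i => ∑ j, x i j * v j) = matToOp x ∘L vecToOp v := by
  ext e i
  simp [matToOp_apply, ContinuousLinearMap.sum_apply, ContinuousLinearMap.mul_apply]

lemma norm_row_sum (x : Matrix (Fin n) (Fin n) (E →L[ℂ] E)) (v : Fin n → (E →L[ℂ] E)) :
    Real.sqrt ‖∑ i, star (∑ j, x i j * v j) * (∑ j, x i j * v j)‖ =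
      ‖matToOp x ∘L vecToOp v‖ := by
  have h : (∑ i, star (∑ j, x i j * v j) * (∑ j, x i j * v j)) =
      ∑ i, star ((fun i => ∑ j, x i j * v j) i) * ((fun i => ∑ j, x i j * v j) i) := rfl
  rw [h, norm_sum_star_mul, vecToOp_matVec]
  exact Real.sqrt_mul_self (by positivity)

lemma matCNorm_eq (x : Matrix (Fin n) (Fin n) (E →L[ℂ] E)) :
    matCNorm x = ‖matToOp x‖ := by
  have hmem : ∀ r ∈ {r : ℝ | ∃ v : Fin n → (E →L[ℂ] E), ‖∑ i, star (v i) * v i‖ ≤ 1 ∧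
      r = Real.sqrt ‖∑ i, star (∑ j, x i j * v j) * (∑ j, x i j * v j)‖},
      r ≤ ‖matToOp x‖ := by
    rintro r ⟨v, hv, rfl⟩
    rw [norm_sum_star_mul] at hv
    have hV : ‖vecToOp v‖ ≤ 1 := by nlinarith [norm_nonneg (vecToOp v)]
    rw [norm_row_sum x v]
    calc ‖matToOp x ∘L vecToOp v‖ ≤ ‖matToOp x‖ * ‖vecToOp v‖ :=
          ContinuousLinearMap.opNorm_comp_le _ _
      _ ≤ ‖matToOp x‖ * 1 := by
          exact mul_le_mul_of_nonneg_left hV (norm_nonneg _)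
      _ = ‖matToOp x‖ := mul_one _
  have h0mem : (0 : ℝ) ∈ {r : ℝ | ∃ v : Fin n → (E →L[ℂ] E), ‖∑ i, star (v i) * v i‖ ≤ 1 ∧
      r = Real.sqrt ‖∑ i, star (∑ j, x i j * v j) * (∑ j, x i j * v j)‖} := by
    exact ⟨0, by simp, by simp⟩
  have hbdd : BddAbove {r : ℝ | ∃ v : Fin n → (E →L[ℂ] E), ‖∑ i, star (v i) * v i‖ ≤ 1 ∧
      r = Real.sqrt ‖∑ i, star (∑ j, x i j * v j) * (∑ j, x i j * v j)‖} := ⟨‖matToOp x‖, hmem⟩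
  apply le_antisymm
  · exact Real.sSup_le hmem (norm_nonneg _)
  · refine ContinuousLinearMap.opNorm_le_bound _ (le_csSup hbdd h0mem) fun ξ => ?_
    by_cases hξ : ξ = 0
    · simp [hξ]
    · obtain ⟨i₀, hi₀⟩ : ∃ i, ξ i ≠ 0 := by
        by_contra hc
        push_neg at hc
        exact hξ (PiLp.ext hc)
      set e : E := (‖ξ i₀‖ : ℂ)⁻¹ • ξ i₀ with he
      have hne : ‖e‖ = 1 := by
        rw [he, norm_smul, norm_inv, Complex.norm_real, norm_norm,
          inv_mul_cancel₀ (norm_ne_zero_iff.mpr hi₀)]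
      set η : Hn E n := (‖ξ‖ : ℂ)⁻¹ • ξ with hη
      have hnη : ‖η‖ = 1 := by
        rw [hη, norm_smul, norm_inv, Complex.norm_real, norm_norm,
          inv_mul_cancel₀ (norm_ne_zero_iff.mpr hξ)]
      set v : Fin n → (E →L[ℂ] E) := fun k =>
        ContinuousLinearMap.smulRight (innerSL ℂ e) (η k) with hv
      have hVeq : vecToOp v = ContinuousLinearMap.smulRight (innerSL ℂ e) η := by
        ext e' k; rfl
      have hVnorm : ‖vecToOp v‖ = 1 := by
        rw [hVeq, ContinuousLinearMap.norm_smulRight_apply, innerSL_apply_norm, hne, hnη, one_mul]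
      have hXVeq : matToOp x ∘L vecToOp v =
          ContinuousLinearMap.smulRight (innerSL ℂ e) (matToOp x η) := by
        ext e'
        have : (matToOp x ∘L vecToOp v) e' = matToOp x ((innerSL ℂ e e') • η) := by
          rw [ContinuousLinearMap.comp_apply, hVeq]; rfl
        rw [this, map_smul]; rfl
      have hXVnorm : ‖matToOp x ∘L vecToOp v‖ = ‖matToOp x η‖ := by
        rw [hXVeq, ContinuousLinearMap.norm_smulRight_apply, innerSL_apply_norm, hne, one_mul]
      have hmemXη : ‖matToOp x η‖ ∈ {r : ℝ | ∃ v : Fin n → (E →L[ℂ] E),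
          ‖∑ i, star (v i) * v i‖ ≤ 1 ∧
          r = Real.sqrt ‖∑ i, star (∑ j, x i j * v j) * (∑ j, x i j * v j)‖} := by
        refine ⟨v, ?_, ?_⟩
        · rw [norm_sum_star_mul, hVnorm, one_mul]
        · rw [norm_row_sum x v, hXVnorm]
      have hξη : ξ = (‖ξ‖ : ℂ) • η := by
        rw [hη, smul_smul, mul_inv_cancel₀ ?_, one_smul]
        exact_mod_cast norm_ne_zero_iff.mpr hξ
      calc ‖matToOp x ξ‖ = ‖ξ‖ * ‖matToOp x η‖ := by
            conv_lhs => rw [hξη]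
            rw [map_smul, norm_smul, Complex.norm_real, norm_norm]
        _ ≤ ‖ξ‖ * sSup _ := by
            exact mul_le_mul_of_nonneg_left (le_csSup hbdd hmemXη) (norm_nonneg _)
        _ = _ * ‖ξ‖ := mul_comm _ _

lemma isPosElem_op_iff (T : E →L[ℂ] E) : IsPosElem T ↔ 0 ≤ T := by
  constructor
  · rintro ⟨s, rfl⟩; exact star_mul_self_nonneg s
  · intro h
    exact ⟨CFC.sqrt T, by
      rw [(IsSelfAdjoint.of_nonneg (CFC.sqrt_nonneg T)).star_eq, CFC.sqrt_mul_sqrt_self T h]⟩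

lemma isPosElem_matrix_iff (x : Matrix (Fin n) (Fin n) (E →L[ℂ] E)) :
    IsPosElem x ↔ 0 ≤ matToOp x := by
  constructor
  · rintro ⟨y, rfl⟩
    rw [matToOp_mul, matToOp_star]
    refine (isPosElem_op_iff _).mp ⟨matToOp y, ?_⟩
    rw [ContinuousLinearMap.star_eq_adjoint]; rfl
  · intro h
    obtain ⟨s, hs⟩ := (isPosElem_op_iff (matToOp x)).mpr h
    refine ⟨opToMat s, matToOp_injective ?_⟩
    rw [matToOp_mul, matToOp_star, matToOp_opToMat, hs, ContinuousLinearMap.star_eq_adjoint]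
    rfl

end S6

namespace S6
open ContinuousLinearMap

variable {C : Type*} [NonUnitalCStarAlgebra C]
variable {K H : Type*}
  [NormedAddCommGroup K] [InnerProductSpace ℂ K] [CompleteSpace K]
  [NormedAddCommGroup H] [InnerProductSpace ℂ H] [CompleteSpace H]

abbrev Lsp (K H : Type*) [NormedAddCommGroup K] [NormedAddCommGroup H] := WithLp 2 (K × H)

def iK : K →L[ℂ] Lsp K H :=
  (WithLp.prodContinuousLinearEquiv 2 ℂ K H).symm.toContinuousLinearMap ∘L
    ContinuousLinearMap.inl ℂ K H

def iH : H →L[ℂ] Lsp K H :=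
  (WithLp.prodContinuousLinearEquiv 2 ℂ K H).symm.toContinuousLinearMap ∘L
    ContinuousLinearMap.inr ℂ K H

def pK : Lsp K H →L[ℂ] K :=
  ContinuousLinearMap.fst ℂ K H ∘L (WithLp.prodContinuousLinearEquiv 2 ℂ K H).toContinuousLinearMap

def pH : Lsp K H →L[ℂ] H :=
  ContinuousLinearMap.snd ℂ K H ∘L (WithLp.prodContinuousLinearEquiv 2 ℂ K H).toContinuousLinearMap

@[simp] lemma pK_iK (k : K) : pK (iK k : Lsp K H) = k := rfl
@[simp] lemma pH_iH (h : H) : pH (iH h : Lsp K H) = h := rfl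
@[simp] lemma pK_iH (h : H) : pK (iH h : Lsp K H) = 0 := rfl
@[simp] lemma pH_iK (k : K) : pH (iK k : Lsp K H) = 0 := rfl

lemma iK_pK_add_iH_pH (v : Lsp K H) : iK (pK v) + iH (pH v) = v := by
  apply (WithLp.prodContinuousLinearEquiv 2 ℂ K H).injective
  rw [map_add]
  have h1 : (WithLp.prodContinuousLinearEquiv 2 ℂ K H) (iK (pK v)) = (pK v, 0) := rfl
  have h2 : (WithLp.prodContinuousLinearEquiv 2 ℂ K H) (iH (pH v)) = (0, pH v) := rfl
  rw [h1, h2]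
  exact Prod.ext (by simp; rfl) (by simp; rfl)

lemma adjoint_iK : ContinuousLinearMap.adjoint (iK : K →L[ℂ] Lsp K H) = pK := by
  symm
  rw [ContinuousLinearMap.eq_adjoint_iff]
  intro v k
  have : (inner ℂ v (iK k : Lsp K H) : ℂ) = inner ℂ (pK v) k + inner ℂ (pH v) (0 : H) := rfl
  rw [this]
  simp

lemma adjoint_iH : ContinuousLinearMap.adjoint (iH : H →L[ℂ] Lsp K H) = pH := by
  symm
  rw [ContinuousLinearMap.eq_adjoint_iff]
  intro v h
  have : (inner ℂ v (iH h : Lsp K H) : ℂ) = inner ℂ (pK v) (0 : K) + inner ℂ (pH v) h := rfl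
  rw [this]
  simp

lemma adjoint_pK : ContinuousLinearMap.adjoint (pK : Lsp K H →L[ℂ] K) = iK := by
  rw [← adjoint_iK, ContinuousLinearMap.adjoint_adjoint]

lemma adjoint_pH : ContinuousLinearMap.adjoint (pH : Lsp K H →L[ℂ] H) = iH := by
  rw [← adjoint_iH, ContinuousLinearMap.adjoint_adjoint]

/-- Block-diagonal operator. -/
def bdiag (S : K →L[ℂ] K) (T : H →L[ℂ] H) : Lsp K H →L[ℂ] Lsp K H :=
  iK ∘L S ∘L pK + iH ∘L T ∘L pH

lemma bdiag_apply (S : K →L[ℂ] K) (T : H →L[ℂ] H) (v : Lsp K H) :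
    bdiag S T v = iK (S (pK v)) + iH (T (pH v)) := rfl

lemma bdiag_mul (S S' : K →L[ℂ] K) (T T' : H →L[ℂ] H) :
    bdiag S T ∘L bdiag S' T' = bdiag (S ∘L S') (T ∘L T') := by
  ext v
  rw [ContinuousLinearMap.comp_apply, bdiag_apply, bdiag_apply, bdiag_apply]
  rw [map_add, map_add, map_add, map_add]
  simp

lemma bdiag_adjoint (S : K →L[ℂ] K) (T : H →L[ℂ] H) :
    ContinuousLinearMap.adjoint (bdiag S T) =
      bdiag (ContinuousLinearMap.adjoint S) (ContinuousLinearMap.adjoint T) := by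
  rw [bdiag, map_add, ContinuousLinearMap.adjoint_comp, ContinuousLinearMap.adjoint_comp,
    ContinuousLinearMap.adjoint_comp, ContinuousLinearMap.adjoint_comp,
    adjoint_iK, adjoint_iH, adjoint_pK, adjoint_pH, bdiag]
  rw [ContinuousLinearMap.comp_assoc, ContinuousLinearMap.comp_assoc]

lemma pK_bdiag_iK (S : K →L[ℂ] K) (T : H →L[ℂ] H) : pK ∘L bdiag S T ∘L iK = S := by
  ext k
  rw [ContinuousLinearMap.comp_apply, ContinuousLinearMap.comp_apply, bdiag_apply]
  simp

lemma pH_bdiag_iH (S : K →L[ℂ] K) (T : H →L[ℂ] H) : pH ∘L bdiag S T ∘L iH = T := by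
  ext h
  rw [ContinuousLinearMap.comp_apply, ContinuousLinearMap.comp_apply, bdiag_apply]
  simp

lemma bdiag_add (S S' : K →L[ℂ] K) (T T' : H →L[ℂ] H) :
    bdiag (S + S') (T + T') = bdiag S T + bdiag S' T' := by
  unfold bdiag
  rw [ContinuousLinearMap.add_comp, ContinuousLinearMap.comp_add,
    ContinuousLinearMap.add_comp, ContinuousLinearMap.comp_add]
  abel

lemma bdiag_smul (r : ℂ) (S : K →L[ℂ] K) (T : H →L[ℂ] H) :
    bdiag (r • S) (r • T) = r • bdiag S T := by
  unfold bdiag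
  rw [ContinuousLinearMap.smul_comp, ContinuousLinearMap.comp_smul,
    ContinuousLinearMap.smul_comp, ContinuousLinearMap.comp_smul, smul_add]

lemma bdiag_zero : bdiag (0 : K →L[ℂ] K) (0 : H →L[ℂ] H) = 0 := by
  unfold bdiag
  simp

/-- The direct sum of two representations. -/
def sumRep (j : RepOn C K) (Φ : RepOn C H) : RepOn C (Lsp K H) where
  toFun c := bdiag (j c) (Φ c)
  map_zero' := by
    show bdiag (j 0) (Φ 0) = 0
    rw [map_zero, map_zero, bdiag_zero]
  map_add' c c' := by
    show bdiag (j (c + c')) (Φ (c + c')) = bdiag (j c) (Φ c) + bdiag (j c') (Φ c')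
    rw [map_add, map_add, bdiag_add]
  map_smul' r c := by
    show bdiag (j (r • c)) (Φ (r • c)) = (MonoidHom.id ℂ) r • bdiag (j c) (Φ c)
    rw [map_smul, map_smul, bdiag_smul]; rfl
  map_mul' c c' := by
    show bdiag (j (c * c')) (Φ (c * c')) = bdiag (j c) (Φ c) * bdiag (j c') (Φ c')
    rw [map_mul, map_mul,
      show bdiag (j c) (Φ c) * bdiag (j c') (Φ c') =
        bdiag (j c) (Φ c) ∘L bdiag (j c') (Φ c') from rfl, bdiag_mul]
    rfl
  map_star' c := by
    show bdiag (j (star c)) (Φ (star c)) = star (bdiag (j c) (Φ c))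
    rw [show star (bdiag (j c) (Φ c)) = ContinuousLinearMap.adjoint (bdiag (j c) (Φ c)) from
      ContinuousLinearMap.star_eq_adjoint _, bdiag_adjoint, map_star, map_star,
      ContinuousLinearMap.star_eq_adjoint, ContinuousLinearMap.star_eq_adjoint]

lemma sumRep_apply (j : RepOn C K) (Φ : RepOn C H) (c : C) :
    sumRep j Φ c = bdiag (j c) (Φ c) := rfl

lemma sumRep_injective (j : RepOn C K) (Φ : RepOn C H) (hj : Function.Injective j) :
    Function.Injective (sumRep j Φ) := by
  intro c c' h
  apply hj
  have := congrArg (fun T => pK ∘L T ∘L iK) h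
  simpa only [sumRep_apply, pK_bdiag_iK] using this

lemma sumRep_nondeg (j : RepOn C K) (Φ : RepOn C H) (hj : NondegRep j) (hΦ : NondegRep Φ) :
    NondegRep (sumRep j Φ) := by
  unfold NondegRep at *
  apply Set.eq_univ_of_univ_subset
  intro v _
  set M := Submodule.span ℂ {w : Lsp K H | ∃ c u, sumRep j Φ c u = w} with hM
  have hKpart : ∀ u ∈ Submodule.span ℂ {x : K | ∃ c k, j c k = x}, (iK u : Lsp K H) ∈ M := by
    intro u hu
    induction hu using Submodule.span_induction with
    | mem x hx =>
      obtain ⟨c, k, rfl⟩ := hx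
      apply Submodule.subset_span
      exact ⟨c, iK k, by rw [sumRep_apply, bdiag_apply]; simp⟩
    | zero => simpa using M.zero_mem
    | add x y _ _ hx hy => rw [map_add]; exact M.add_mem hx hy
    | smul r x _ hx => rw [map_smul]; exact M.smul_mem r hx
  have hHpart : ∀ u ∈ Submodule.span ℂ {x : H | ∃ c h, Φ c h = x}, (iH u : Lsp K H) ∈ M := by
    intro u hu
    induction hu using Submodule.span_induction with
    | mem x hx =>
      obtain ⟨c, h, rfl⟩ := hx
      apply Submodule.subset_span
      exact ⟨c, iH h, by rw [sumRep_apply, bdiag_apply]; simp⟩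
    | zero => simpa using M.zero_mem
    | add x y _ _ hx hy => rw [map_add]; exact M.add_mem hx hy
    | smul r x _ hx => rw [map_smul]; exact M.smul_mem r hx
  have h1 : (iK (pK v) : Lsp K H) ∈ closure (M : Set (Lsp K H)) := by
    have hv1 : pK v ∈ closure (Submodule.span ℂ {x : K | ∃ c k, j c k = x} : Set K) := by
      rw [hj]; trivial
    exact map_mem_closure (iK : K →L[ℂ] Lsp K H).continuous hv1 hKpart
  have h2 : (iH (pH v) : Lsp K H) ∈ closure (M : Set (Lsp K H)) := by
    have hv2 : pH v ∈ closure (Submodule.span ℂ {x : H | ∃ c h, Φ c h = x} : Set H) := by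
      rw [hΦ]; trivial
    exact map_mem_closure (iH : H →L[ℂ] Lsp K H).continuous hv2 hHpart
  have := M.topologicalClosure.add_mem (by exact h1) (by exact h2)
  rw [iK_pK_add_iH_pH] at this
  exact this

end S6

namespace S6
open ContinuousLinearMap

variable {C : Type*} [NonUnitalCStarAlgebra C]
variable {K H : Type*}
  [NormedAddCommGroup K] [InnerProductSpace ℂ K] [CompleteSpace K]
  [NormedAddCommGroup H] [InnerProductSpace ℂ H] [CompleteSpace H]
  {n : ℕ}

lemma matToOp_map_conj {E E₂ : Type*}
    [NormedAddCommGroup E] [InnerProductSpace ℂ E] [CompleteSpace E]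
    [NormedAddCommGroup E₂] [InnerProductSpace ℂ E₂] [CompleteSpace E₂]
    (x : Matrix (Fin n) (Fin n) (E →L[ℂ] E)) (a : E →L[ℂ] E₂) (b : E₂ →L[ℂ] E) :
    matToOp (x.map fun T => a ∘L T ∘L b) = pimap n a ∘L matToOp x ∘L pimap n b := by
  ext v i
  simp only [ContinuousLinearMap.comp_apply, matToOp_apply, Matrix.map_apply, pimap_apply,
    map_sum]

lemma pK_comp_iK : (pK : Lsp K H →L[ℂ] K) ∘L iK = ContinuousLinearMap.id ℂ K := by ext k; rfl
lemma pH_comp_iH : (pH : Lsp K H →L[ℂ] H) ∘L iH = ContinuousLinearMap.id ℂ H := by ext h; rfl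
lemma pK_comp_iH : (pK : Lsp K H →L[ℂ] K) ∘L iH = 0 := by ext h; simp
lemma pH_comp_iK : (pH : Lsp K H →L[ℂ] H) ∘L iK = 0 := by ext k; simp

lemma iKpK_add_iHpH :
    (iK ∘L pK + iH ∘L pH : Lsp K H →L[ℂ] Lsp K H) = ContinuousLinearMap.id ℂ (Lsp K H) := by
  ext v
  exact iK_pK_add_iH_pH v

/-- The compression-dilation ucp map associated to `Ψ`. -/
def psiMap (Ψ : (K →L[ℂ] K) →ₗ[ℂ] (H →L[ℂ] H)) :
    (Lsp K H →L[ℂ] Lsp K H) →ₗ[ℂ] (Lsp K H →L[ℂ] Lsp K H) where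
  toFun T := bdiag (pK ∘L T ∘L iK) (Ψ (pK ∘L T ∘L iK))
  map_add' T T' := by
    have h : pK ∘L (T + T') ∘L iK = pK ∘L T ∘L iK + pK ∘L T' ∘L iK := by
      rw [ContinuousLinearMap.add_comp, ContinuousLinearMap.comp_add]
    show bdiag (pK ∘L (T + T') ∘L iK) (Ψ (pK ∘L (T + T') ∘L iK)) =
      bdiag (pK ∘L T ∘L iK) (Ψ (pK ∘L T ∘L iK)) + bdiag (pK ∘L T' ∘L iK) (Ψ (pK ∘L T' ∘L iK))
    rw [h, map_add, bdiag_add]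
  map_smul' r T := by
    have h : pK ∘L (r • T) ∘L iK = r • (pK ∘L T ∘L iK) := by
      rw [ContinuousLinearMap.smul_comp, ContinuousLinearMap.comp_smul]
    show bdiag (pK ∘L (r • T) ∘L iK) (Ψ (pK ∘L (r • T) ∘L iK)) =
      (RingHom.id ℂ) r • bdiag (pK ∘L T ∘L iK) (Ψ (pK ∘L T ∘L iK))
    rw [h, map_smul, bdiag_smul]
    rfl

lemma psiMap_apply (Ψ : (K →L[ℂ] K) →ₗ[ℂ] (H →L[ℂ] H)) (T : Lsp K H →L[ℂ] Lsp K H) :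
    psiMap Ψ T = bdiag (pK ∘L T ∘L iK) (Ψ (pK ∘L T ∘L iK)) := rfl

lemma bdiag_one : bdiag (1 : K →L[ℂ] K) (1 : H →L[ℂ] H) = 1 := by
  ext v
  rw [bdiag_apply, ContinuousLinearMap.one_apply, ContinuousLinearMap.one_apply,
    ContinuousLinearMap.one_apply]
  exact iK_pK_add_iH_pH v

lemma psiMap_one (Ψ : (K →L[ℂ] K) →ₗ[ℂ] (H →L[ℂ] H)) (hΨ1 : Ψ 1 = 1) :
    psiMap Ψ (1 : Lsp K H →L[ℂ] Lsp K H) = 1 := by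
  have h : pK ∘L (1 : Lsp K H →L[ℂ] Lsp K H) ∘L iK = 1 := by
    ext k
    rw [ContinuousLinearMap.comp_apply, ContinuousLinearMap.comp_apply,
      ContinuousLinearMap.one_apply, ContinuousLinearMap.one_apply, pK_iK]
  rw [psiMap_apply, h, hΨ1, bdiag_one]

lemma psiMap_fix {j : RepOn C K} {Φ : RepOn C H}
    (Ψ : (K →L[ℂ] K) →ₗ[ℂ] (H →L[ℂ] H)) (g : C) (hg : Ψ (j g) = Φ g) :
    psiMap Ψ (sumRep j Φ g) = sumRep j Φ g := by
  rw [psiMap_apply, show sumRep j Φ g = bdiag (j g) (Φ g) from rfl, pK_bdiag_iK, hg]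

lemma psiMap_extract {j : RepOn C K} {Φ : RepOn C H}
    (Ψ : (K →L[ℂ] K) →ₗ[ℂ] (H →L[ℂ] H)) (c : C)
    (h : psiMap Ψ (sumRep j Φ c) = sumRep j Φ c) : Ψ (j c) = Φ c := by
  have h1 : pH ∘L psiMap Ψ (sumRep j Φ c) ∘L iH = Ψ (j c) := by
    rw [psiMap_apply, pH_bdiag_iH, show sumRep j Φ c = bdiag (j c) (Φ c) from rfl, pK_bdiag_iK]
  rw [h, show sumRep j Φ c = bdiag (j c) (Φ c) from rfl, pH_bdiag_iH] at h1
  exact h1.symm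

lemma pimap_pK_eq_adjoint :
    pimap n (pK : Lsp K H →L[ℂ] K) = ContinuousLinearMap.adjoint (pimap n iK) := by
  rw [pimap_adjoint, adjoint_iK]

lemma pimap_pH_eq_adjoint :
    pimap n (pH : Lsp K H →L[ℂ] H) = ContinuousLinearMap.adjoint (pimap n iH) := by
  rw [pimap_adjoint, adjoint_iH]

lemma psiMap_split (Ψ : (K →L[ℂ] K) →ₗ[ℂ] (H →L[ℂ] H))
    (x : Matrix (Fin n) (Fin n) (Lsp K H →L[ℂ] Lsp K H)) :
    x.map ⇑(psiMap Ψ) =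
      ((x.map fun T => pK ∘L T ∘L iK).map fun S => iK ∘L S ∘L pK) +
        (((x.map fun T => pK ∘L T ∘L iK).map ⇑Ψ).map fun S => iH ∘L S ∘L pH) := by
  funext i j
  rw [Matrix.add_apply, Matrix.map_apply, Matrix.map_apply, Matrix.map_apply, Matrix.map_apply,
    Matrix.map_apply, Matrix.map_apply]
  rfl

lemma psiMap_isCP (Ψ : (K →L[ℂ] K) →ₗ[ℂ] (H →L[ℂ] H)) (hΨ : IsCPMap Ψ) :
    IsCPMap (psiMap Ψ) := by
  intro n x hx
  rw [isPosElem_matrix_iff] at hx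
  rw [ContinuousLinearMap.nonneg_iff_isPositive] at hx
  set c : Matrix (Fin n) (Fin n) (K →L[ℂ] K) := x.map fun T => pK ∘L T ∘L iK with hc
  have hcpos : (matToOp c).IsPositive := by
    rw [hc, matToOp_map_conj x (pK : Lsp K H →L[ℂ] K) (iK : K →L[ℂ] Lsp K H), pimap_pK_eq_adjoint]
    exact hx.adjoint_conj (pimap n (iK : K →L[ℂ] Lsp K H))
  have hd : IsPosElem (c.map ⇑Ψ) := by
    apply hΨ n c
    rw [isPosElem_matrix_iff, ContinuousLinearMap.nonneg_iff_isPositive]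
    exact hcpos
  have hdpos : (matToOp (c.map ⇑Ψ)).IsPositive := by
    rw [← ContinuousLinearMap.nonneg_iff_isPositive, ← isPosElem_matrix_iff]
    exact hd
  rw [isPosElem_matrix_iff, psiMap_split, matToOp_add,
    ContinuousLinearMap.nonneg_iff_isPositive, ← hc]
  apply ContinuousLinearMap.IsPositive.add
  · rw [matToOp_map_conj c (iK : K →L[ℂ] Lsp K H) (pK : Lsp K H →L[ℂ] K), pimap_pK_eq_adjoint]
    exact hcpos.conj_adjoint (pimap n (iK : K →L[ℂ] Lsp K H))
  · rw [matToOp_map_conj (c.map ⇑Ψ) (iH : H →L[ℂ] Lsp K H) (pH : Lsp K H →L[ℂ] H), pimap_pH_eq_adjoint]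
    exact hdpos.conj_adjoint (pimap n (iH : H →L[ℂ] Lsp K H))

lemma pimap_iK_isometry (v : Hn K n) : ‖pimap n (iK : K →L[ℂ] Lsp K H) v‖ = ‖v‖ := by
  apply norm_pimap_apply
  rw [adjoint_iK, pK_comp_iK]

lemma pimap_iH_isometry (v : Hn H n) : ‖pimap n (iH : H →L[ℂ] Lsp K H) v‖ = ‖v‖ := by
  apply norm_pimap_apply
  rw [adjoint_iH, pH_comp_iH]


end S6

namespace S6
open ContinuousLinearMap
variable {C : Type*} [NonUnitalCStarAlgebra C]
variable {K H : Type*}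
  [NormedAddCommGroup K] [InnerProductSpace ℂ K] [CompleteSpace K]
  [NormedAddCommGroup H] [InnerProductSpace ℂ H] [CompleteSpace H]
  {n : ℕ}
lemma bdiag_op_norm_le {n : ℕ} (S : Hn K n →L[ℂ] Hn K n) (R : Hn H n →L[ℂ] Hn H n)
    (M : ℝ) (hM : 0 ≤ M) (hS : ‖S‖ ≤ M) (hR : ‖R‖ ≤ M) :
    ‖pimap n (iK : K →L[ℂ] Lsp K H) ∘L S ∘L
        ContinuousLinearMap.adjoint (pimap n (iK : K →L[ℂ] Lsp K H)) +
      pimap n (iH : H →L[ℂ] Lsp K H) ∘L R ∘L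
        ContinuousLinearMap.adjoint (pimap n (iH : H →L[ℂ] Lsp K H))‖ ≤ M := by
  set A := pimap n (iK : K →L[ℂ] Lsp K H) with hA
  set B := pimap n (iH : H →L[ℂ] Lsp K H) with hB
  apply ContinuousLinearMap.opNorm_le_bound _ hM
  intro v
  set a := ContinuousLinearMap.adjoint A v with ha
  set b := ContinuousLinearMap.adjoint B v with hb
  have happ : (A ∘L S ∘L ContinuousLinearMap.adjoint A +
      B ∘L R ∘L ContinuousLinearMap.adjoint B) v = A (S a) + B (R b) := by
    rw [ContinuousLinearMap.add_apply, ContinuousLinearMap.comp_apply,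
      ContinuousLinearMap.comp_apply, ContinuousLinearMap.comp_apply,
      ContinuousLinearMap.comp_apply]
  have hAB : ContinuousLinearMap.adjoint A ∘L B = 0 := by
    rw [hA, hB, ← pimap_pK_eq_adjoint, ← pimap_comp, pK_comp_iH, pimap_zero]
  have horth : (inner ℂ (A (S a)) (B (R b)) : ℂ) = 0 := by
    rw [← ContinuousLinearMap.adjoint_inner_right A]
    have : ContinuousLinearMap.adjoint A (B (R b)) = 0 := by
      rw [← ContinuousLinearMap.comp_apply, hAB]; rfl
    rw [this, inner_zero_right]
  have hnorm2 : ‖a‖ ^ 2 + ‖b‖ ^ 2 = ‖v‖ ^ 2 := by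
    have ha2 : ‖a‖ ^ 2 = RCLike.re (inner ℂ v ((A ∘L ContinuousLinearMap.adjoint A) v) : ℂ) := by
      rw [norm_sq_eq_re_inner (𝕜 := ℂ) a]
      congr 1
      rw [ha, ContinuousLinearMap.adjoint_inner_left]
      rfl
    have hb2 : ‖b‖ ^ 2 = RCLike.re (inner ℂ v ((B ∘L ContinuousLinearMap.adjoint B) v) : ℂ) := by
      rw [norm_sq_eq_re_inner (𝕜 := ℂ) b]
      congr 1
      rw [hb, ContinuousLinearMap.adjoint_inner_left]
      rfl
    have hsum : (A ∘L ContinuousLinearMap.adjoint A) + (B ∘L ContinuousLinearMap.adjoint B) =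
        ContinuousLinearMap.id ℂ (Hn (Lsp K H) n) := by
      rw [hA, hB, ← pimap_pK_eq_adjoint, ← pimap_pH_eq_adjoint, ← pimap_comp, ← pimap_comp,
        ← pimap_add, iKpK_add_iHpH, pimap_id]
    rw [ha2, hb2, ← map_add, ← inner_add_right]
    have : (A ∘L ContinuousLinearMap.adjoint A) v + (B ∘L ContinuousLinearMap.adjoint B) v
        = v := by
      rw [← ContinuousLinearMap.add_apply, hsum]; rfl
    rw [this, ← norm_sq_eq_re_inner (𝕜 := ℂ) v]
  have hSa : ‖A (S a)‖ ≤ M * ‖a‖ := by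
    rw [pimap_iK_isometry]
    calc ‖S a‖ ≤ ‖S‖ * ‖a‖ := ContinuousLinearMap.le_opNorm _ _
      _ ≤ M * ‖a‖ := mul_le_mul_of_nonneg_right hS (norm_nonneg _)
  have hRb : ‖B (R b)‖ ≤ M * ‖b‖ := by
    rw [pimap_iH_isometry]
    calc ‖R b‖ ≤ ‖R‖ * ‖b‖ := ContinuousLinearMap.le_opNorm _ _
      _ ≤ M * ‖b‖ := mul_le_mul_of_nonneg_right hR (norm_nonneg _)
  have hsq : ‖A (S a) + B (R b)‖ ^ 2 = ‖A (S a)‖ ^ 2 + ‖B (R b)‖ ^ 2 := by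
    rw [norm_add_sq (𝕜 := ℂ), horth]
    simp
  have hfinal : ‖A (S a) + B (R b)‖ ^ 2 ≤ (M * ‖v‖) ^ 2 := by
    rw [hsq]
    have h1 : ‖A (S a)‖ ^ 2 ≤ (M * ‖a‖) ^ 2 := by
      have := norm_nonneg (A (S a)); nlinarith
    have h2 : ‖B (R b)‖ ^ 2 ≤ (M * ‖b‖) ^ 2 := by
      have := norm_nonneg (B (R b)); nlinarith
    calc ‖A (S a)‖ ^ 2 + ‖B (R b)‖ ^ 2 ≤ (M * ‖a‖) ^ 2 + (M * ‖b‖) ^ 2 := add_le_add h1 h2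
      _ = M ^ 2 * (‖a‖ ^ 2 + ‖b‖ ^ 2) := by ring
      _ = (M * ‖v‖) ^ 2 := by rw [hnorm2]; ring
  rw [happ]
  nlinarith [norm_nonneg (A (S a) + B (R b)), mul_nonneg hM (norm_nonneg v)]

lemma psiMap_isCC (Ψ : (K →L[ℂ] K) →ₗ[ℂ] (H →L[ℂ] H)) (hΨ : IsCCMap Ψ) :
    IsCCMap (psiMap Ψ) := by
  intro n x
  rw [matCNorm_eq (x.map ⇑(psiMap Ψ)), matCNorm_eq x]
  set c : Matrix (Fin n) (Fin n) (K →L[ℂ] K) := x.map fun T => pK ∘L T ∘L iK with hc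
  have hSX : ‖matToOp c‖ ≤ ‖matToOp x‖ := by
    rw [hc, matToOp_map_conj x (pK : Lsp K H →L[ℂ] K) (iK : K →L[ℂ] Lsp K H)]
    calc ‖pimap n (pK : Lsp K H →L[ℂ] K) ∘L (matToOp x ∘L pimap n (iK : K →L[ℂ] Lsp K H))‖
        ≤ ‖pimap n (pK : Lsp K H →L[ℂ] K)‖ * ‖matToOp x ∘L pimap n (iK : K →L[ℂ] Lsp K H)‖ :=
          ContinuousLinearMap.opNorm_comp_le _ _
      _ ≤ 1 * (‖matToOp x‖ * 1) := by
          apply mul_le_mul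
          · rw [pimap_pK_eq_adjoint]
            rw [show ‖ContinuousLinearMap.adjoint (pimap n (iK : K →L[ℂ] Lsp K H))‖ =
              ‖pimap n (iK : K →L[ℂ] Lsp K H)‖ from
                (ContinuousLinearMap.adjoint (𝕜 := ℂ)).norm_map _]
            exact ContinuousLinearMap.opNorm_le_bound _ zero_le_one fun u => by
              rw [pimap_iK_isometry, one_mul]
          · calc ‖matToOp x ∘L pimap n (iK : K →L[ℂ] Lsp K H)‖
                ≤ ‖matToOp x‖ * ‖pimap n (iK : K →L[ℂ] Lsp K H)‖ :=
                ContinuousLinearMap.opNorm_comp_le _ _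
              _ ≤ ‖matToOp x‖ * 1 := by
                  apply mul_le_mul_of_nonneg_left ?_ (norm_nonneg _)
                  exact ContinuousLinearMap.opNorm_le_bound _ zero_le_one fun u => by
                    rw [pimap_iK_isometry, one_mul]
          · positivity
          · exact zero_le_one
      _ = ‖matToOp x‖ := by ring
  have hRS : ‖matToOp (c.map ⇑Ψ)‖ ≤ ‖matToOp c‖ := by
    have := hΨ n c
    rwa [matCNorm_eq (c.map ⇑Ψ), matCNorm_eq c] at this
  have hrw : matToOp (x.map ⇑(psiMap Ψ)) =
      pimap n (iK : K →L[ℂ] Lsp K H) ∘L matToOp c ∘L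
        ContinuousLinearMap.adjoint (pimap n (iK : K →L[ℂ] Lsp K H)) +
      pimap n (iH : H →L[ℂ] Lsp K H) ∘L matToOp (c.map ⇑Ψ) ∘L
        ContinuousLinearMap.adjoint (pimap n (iH : H →L[ℂ] Lsp K H)) := by
    rw [psiMap_split, matToOp_add, ← hc, matToOp_map_conj c (iK : K →L[ℂ] Lsp K H) (pK : Lsp K H →L[ℂ] K),
      matToOp_map_conj (c.map ⇑Ψ) (iH : H →L[ℂ] Lsp K H) (pH : Lsp K H →L[ℂ] H), pimap_pK_eq_adjoint, pimap_pH_eq_adjoint]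
  rw [hrw]
  exact bdiag_op_norm_le _ _ ‖matToOp x‖ (norm_nonneg _) hSX (hRS.trans hSX)

end S6

open S6 in
/-- If a generating set `G ⊆ C` is ucp hyperrigid (resp. ccp hyperrigid),
then every non-degenerate *-representation of `C` has the ucp (resp. ccp) unique extension
property with respect to `G`. -/
theorem statement6 {C : Type w} [NonUnitalCStarAlgebra C] (G : Set C)
    (hG : GeneratesCStar G) :
    (UCPHyperrigid.{u, w} G →
      ∀ (H : HilbertC.{u}) (Φ : RepOn C H.carrier), NondegRep Φ → HasUCPUep.{u, u, w} Φ G)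
    ∧
    (CCPHyperrigid.{u, w} G →
      ∀ (H : HilbertC.{u}) (Φ : RepOn C H.carrier), NondegRep Φ → HasCCPUep.{u, u, w} Φ G) := by
  constructor
  · intro hyper Hsp Φ hΦnd Ksp j hjinj hjnd Ψ hΨ hgen c
    have happly := hyper ⟨Lsp Ksp.carrier Hsp.carrier⟩ (sumRep j Φ)
      (sumRep_injective j Φ hjinj) (sumRep_nondeg j Φ hjnd hΦnd)
      (fun _ => psiMap Ψ)
      (fun _ => ⟨psiMap_isCP Ψ hΨ.1, psiMap_one Ψ hΨ.2⟩)
      (fun g hg => by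
        have hfix := psiMap_fix (j := j) (Φ := Φ) Ψ g (hgen g hg)
        simp only [hfix, sub_self, norm_zero]
        exact tendsto_const_nhds)
      c
    have h0 : ‖psiMap Ψ (sumRep j Φ c) - sumRep j Φ c‖ = 0 :=
      (tendsto_nhds_unique tendsto_const_nhds happly)
    have key : psiMap Ψ (sumRep j Φ c) = sumRep j Φ c := by
      rw [← sub_eq_zero]
      exact norm_eq_zero.mp h0
    exact psiMap_extract Ψ c key
  · intro hyper Hsp Φ hΦnd Ksp j hjinj hjnd Ψ hΨ hgen c
    have happly := hyper ⟨Lsp Ksp.carrier Hsp.carrier⟩ (sumRep j Φ)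
      (sumRep_injective j Φ hjinj) (sumRep_nondeg j Φ hjnd hΦnd)
      (fun _ => psiMap Ψ)
      (fun _ => ⟨psiMap_isCP Ψ hΨ.1, psiMap_isCC Ψ hΨ.2⟩)
      (fun g hg => by
        have hfix := psiMap_fix (j := j) (Φ := Φ) Ψ g (hgen g hg)
        simp only [hfix, sub_self, norm_zero]
        exact tendsto_const_nhds)
      c
    have h0 : ‖psiMap Ψ (sumRep j Φ c) - sumRep j Φ c‖ = 0 :=
      (tendsto_nhds_unique tendsto_const_nhds happly)
    have key : psiMap Ψ (sumRep j Φ c) = sumRep j Φ c := by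
      rw [← sub_eq_zero]
      exact norm_eq_zero.mp h0
    exact psiMap_extract Ψ c key
end
end
end

section
/- Let C be a C*-algebra, G ⊆ C a generating set, and Φ : C → B(H) a *-representation. Suppose that for every *-representation Φ' : C → B(H') with H a closed subspace of H' and Φ(g) = P_H Φ'(g)|_H for all g ∈ G, the subspace H is invariant under all operators Φ'(g), g ∈ G, or the subspace H is co-invariant (its orthogonal complement is invariant) under all operators Φ'(g), g ∈ G. Then Φ is maximal on G if and only if Φ is maximal on the smallest closed (not necessarily unital) subalgebra of C containing G. -/
open scoped ComplexOrder CStarAlgebra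

noncomputable section

universe u v w

/-- Suppose that for every dilation `Φ'` of `Φ` on `G` (along an isometry
`V : H → H'`), the subspace `H` is invariant or co-invariant for the operators `Φ'(g)`,
`g ∈ G`. Then `Φ` is maximal on `G` iff `Φ` is maximal on the smallest closed (non-unital)
subalgebra of `C` containing `G`. -/
theorem statement8 {C : Type w} [NonUnitalCStarAlgebra C] (G : Set C)
    (hG : GeneratesCStar G)
    {H : Type u} [NormedAddCommGroup H] [InnerProductSpace ℂ H] [CompleteSpace H]
    (Φ : RepOn C H)
    (hinv : ∀ (K : HilbertC.{v}) (Φ' : RepOn C K.carrier) (V : H →ₗᵢ[ℂ] K.carrier),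
      (∀ g ∈ G, ∀ h h' : H, (inner ℂ (Φ' g (V h)) (V h') : ℂ) = inner ℂ (Φ g h) h') →
      ((∀ g ∈ G, ∀ h : H, Φ' g (V h) ∈ Set.range ⇑V) ∨
        (∀ g ∈ G, ∀ h : H, star (Φ' g) (V h) ∈ Set.range ⇑V))) :
    MaximalOnSet.{u, v, w} Φ G ↔
      MaximalOnSet.{u, v, w} Φ (closure (NonUnitalAlgebra.adjoin ℂ G : Set C)) := by
  classical
  constructor
  · -- maximal on G → maximal on closure of adjoin (the hard direction)
    intro hmax K Φ' V hcomp
    have hG' : ∀ g ∈ G, ∀ h h' : H,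
        (inner ℂ (Φ' g (V h)) (V h') : ℂ) = inner ℂ (Φ g h) h' := by
      intro g hg
      exact hcomp g (subset_closure (NonUnitalAlgebra.subset_adjoin ℂ hg))
    exact hmax K Φ' V hG'
  · -- maximal on closure of adjoin → maximal on G
    intro hmax K Φ' V hcomp
    have hcontΦ : Continuous Φ := map_continuous Φ
    have hcontΦ' : Continuous Φ' := map_continuous Φ'
    -- from hinv, either invariance or co-invariance
    rcases hinv K Φ' V hcomp with hI | hI
    · -- invariant case: Φ' c (V h) = V (Φ c h) for all c in adjoin
      have key : ∀ c ∈ closure (NonUnitalAlgebra.adjoin ℂ G : Set C),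
          ∀ h : H, Φ' c (V h) = V (Φ c h) := by
        have hclosed : IsClosed {c : C | ∀ h : H, Φ' c (V h) = V (Φ c h)} := by
          rw [Set.setOf_forall]
          refine isClosed_iInter fun h => isClosed_eq ?_ ?_
          · exact (ContinuousLinearMap.apply ℂ K.carrier (V h)).continuous.comp hcontΦ'
          · exact V.continuous.comp
              ((ContinuousLinearMap.apply ℂ H h).continuous.comp hcontΦ)
        have hsub : (NonUnitalAlgebra.adjoin ℂ G : Set C) ⊆
            {c : C | ∀ h : H, Φ' c (V h) = V (Φ c h)} := by
          intro c hc
          induction hc using NonUnitalAlgebra.adjoin_induction with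
          | mem g hg =>
            intro h
            obtain ⟨k, hk⟩ := hI g hg h
            have hk' : k = Φ g h := by
              apply ext_inner_right ℂ
              intro h'
              have := hcomp g hg h h'
              rw [← hk] at this
              rwa [V.inner_map_map] at this
            rw [← hk, hk']
          | add x y hx hy px py =>
            intro h
            simp only [map_add, ContinuousLinearMap.add_apply, px h, py h]
          | zero => intro h; simp
          | mul x y hx hy px py =>
            intro h
            simp only [map_mul, ContinuousLinearMap.mul_apply, py h, px (Φ y h)]
          | smul r x hx px =>
            intro h
            simp only [map_smul, ContinuousLinearMap.smul_apply, px h]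
        exact fun c hc h => closure_minimal hsub hclosed hc h
      refine hmax K Φ' V ?_
      intro y hy h h'
      rw [key y hy h, V.inner_map_map]
    · -- co-invariant case: star (Φ' c) (V h) = V (star (Φ c) h) for all c in adjoin
      have key : ∀ c ∈ closure (NonUnitalAlgebra.adjoin ℂ G : Set C),
          ∀ h : H, star (Φ' c) (V h) = V (star (Φ c) h) := by
        have hclosed : IsClosed {c : C | ∀ h : H, star (Φ' c) (V h) = V (star (Φ c) h)} := by
          rw [Set.setOf_forall]
          refine isClosed_iInter fun h => isClosed_eq ?_ ?_
          · exact (ContinuousLinearMap.apply ℂ K.carrier (V h)).continuous.comp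
              (continuous_star.comp hcontΦ')
          · exact V.continuous.comp ((ContinuousLinearMap.apply ℂ H h).continuous.comp
              (continuous_star.comp hcontΦ))
        have hsub : (NonUnitalAlgebra.adjoin ℂ G : Set C) ⊆
            {c : C | ∀ h : H, star (Φ' c) (V h) = V (star (Φ c) h)} := by
          intro c hc
          induction hc using NonUnitalAlgebra.adjoin_induction with
          | mem g hg =>
            intro h
            obtain ⟨k, hk⟩ := hI g hg h
            have hk' : k = star (Φ g) h := by
              apply ext_inner_right ℂ
              intro h'
              have h1 : (inner ℂ (star (Φ' g) (V h)) (V h') : ℂ) = inner ℂ (V h) ((Φ' g) (V h')) := by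
                rw [ContinuousLinearMap.star_eq_adjoint, ContinuousLinearMap.adjoint_inner_left]
              have h2 : (inner ℂ (V h) ((Φ' g) (V h')) : ℂ)
                  = starRingEnd ℂ (inner ℂ ((Φ' g) (V h')) (V h)) := by
                rw [← inner_conj_symm]
              have h3 : (inner ℂ (star (Φ g) h) h' : ℂ) = inner ℂ h ((Φ g) h') := by
                rw [ContinuousLinearMap.star_eq_adjoint, ContinuousLinearMap.adjoint_inner_left]
              rw [← hk, V.inner_map_map] at h1
              rw [h1, h2, hcomp g hg h' h, ← inner_conj_symm, h3]
              exact starRingEnd_self_apply _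
            rw [← hk, hk']
          | add x y hx hy px py =>
            intro h
            simp only [map_add, star_add, ContinuousLinearMap.add_apply, px h, py h]
          | zero => intro h; simp
          | mul x y hx hy px py =>
            intro h
            simp only [map_mul, star_mul, ContinuousLinearMap.mul_apply, px h, py (star (Φ x) h)]
          | smul r x hx px =>
            intro h
            simp only [map_smul, star_smul, ContinuousLinearMap.smul_apply, px h]
        exact fun c hc h => closure_minimal hsub hclosed hc h
      refine hmax K Φ' V ?_
      intro y hy h h'
      have h1 : (inner ℂ ((Φ' y) (V h)) (V h') : ℂ) = inner ℂ (V h) (star (Φ' y) (V h')) := by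
        rw [ContinuousLinearMap.star_eq_adjoint, ContinuousLinearMap.adjoint_inner_right]
      rw [h1, key y hy h', V.inner_map_map, ContinuousLinearMap.star_eq_adjoint,
        ContinuousLinearMap.adjoint_inner_right]
end
end

section
/- Let C be a C*-algebra, let G ⊆ C be a separating generating set, and let Φ : C → B(H) be a *-representation. Let L denote the closed linear span of {Φ(c)h : c ∈ C, h ∈ H} and P_L the orthogonal projection of H onto L. If j : C → B(K) is a *-representation and Ψ : B(K) → B(H) is a completely contractive completely positive map such that Ψ(j(g)) = Φ(g) for every g ∈ G, then Ψ(j(c)) = P_L Ψ(j(c)) P_L for all c ∈ C. -/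
open scoped ComplexOrder

noncomputable section

universe u v w

section Aux16

open ComplexStarModule

local notation "⟪" x ", " y "⟫" => @inner ℂ _ _ x y

variable {H' : Type*} [NormedAddCommGroup H'] [InnerProductSpace ℂ H'] [CompleteSpace H']
variable {K' : Type*} [NormedAddCommGroup K'] [InnerProductSpace ℂ K'] [CompleteSpace K']

lemma IsPosElem.isSelfAdjoint' {A : Type*} [NonUnitalSemiring A] [StarRing A] {a : A}
    (ha : IsPosElem a) : IsSelfAdjoint a := by
  obtain ⟨y, rfl⟩ := ha
  exact IsSelfAdjoint.star_mul_self y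

lemma isPosElem_matrixFinOne_iff {A : Type*} [NonUnitalSemiring A] [StarRing A]
    (x : Matrix (Fin 1) (Fin 1) A) : IsPosElem x ↔ IsPosElem (x 0 0) := by
  constructor
  · rintro ⟨Y, hY⟩
    refine ⟨Y 0 0, ?_⟩
    have := congrFun (congrFun hY 0) 0
    simpa [Matrix.mul_apply, Matrix.star_apply, Fin.sum_univ_one] using this
  · rintro ⟨y, hy⟩
    refine ⟨Matrix.of fun _ _ => y, ?_⟩
    ext i k
    fin_cases i <;> fin_cases k <;>
      simpa [Matrix.mul_apply, Matrix.star_apply, Fin.sum_univ_one] using hy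

lemma matCNorm_finOne {A : Type*} [NonUnitalCStarAlgebra A] (x : Matrix (Fin 1) (Fin 1) A) :
    matCNorm x = ‖x 0 0‖ := by
  set a := x 0 0 with ha
  have hset : {r : ℝ | ∃ v : Fin 1 → A, ‖∑ i, star (v i) * v i‖ ≤ 1 ∧
      r = Real.sqrt ‖∑ i, star (∑ j, x i j * v j) * (∑ j, x i j * v j)‖}
      = {r : ℝ | ∃ b : A, ‖b‖ ≤ 1 ∧ r = ‖a * b‖} := by
    ext r
    simp only [Set.mem_setOf_eq, Fin.sum_univ_one]
    constructor
    · rintro ⟨v, hv, rfl⟩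
      refine ⟨v 0, ?_, ?_⟩
      · rw [CStarRing.norm_star_mul_self, ← sq] at hv
        exact (sq_le_one_iff₀ (norm_nonneg _)).mp hv
      · rw [CStarRing.norm_star_mul_self, ← sq, Real.sqrt_sq (norm_nonneg _), ha]
    · rintro ⟨b, hb, rfl⟩
      refine ⟨fun _ => b, ?_, ?_⟩
      · rw [CStarRing.norm_star_mul_self, ← sq]
        exact (sq_le_one_iff₀ (norm_nonneg _)).mpr hb
      · rw [CStarRing.norm_star_mul_self, ← sq, Real.sqrt_sq (norm_nonneg _), ha]
  have hbdd : ∀ r ∈ {r : ℝ | ∃ b : A, ‖b‖ ≤ 1 ∧ r = ‖a * b‖}, r ≤ ‖a‖ := by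
    rintro r ⟨b, hb, rfl⟩
    calc ‖a * b‖ ≤ ‖a‖ * ‖b‖ := norm_mul_le _ _
      _ ≤ ‖a‖ * 1 := by gcongr
      _ = ‖a‖ := mul_one _
  rw [matCNorm, hset]
  refine le_antisymm (Real.sSup_le hbdd (norm_nonneg _)) ?_
  have hBdd : BddAbove {r : ℝ | ∃ b : A, ‖b‖ ≤ 1 ∧ r = ‖a * b‖} := ⟨‖a‖, hbdd⟩
  rcases eq_or_ne a 0 with h | h
  · have h0 : (0:ℝ) ∈ {r : ℝ | ∃ b : A, ‖b‖ ≤ 1 ∧ r = ‖a * b‖} :=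
      ⟨0, by simp, by simp⟩
    simpa [h] using le_csSup hBdd h0
  · have hmem : ‖a‖ ∈ {r : ℝ | ∃ b : A, ‖b‖ ≤ 1 ∧ r = ‖a * b‖} := by
      refine ⟨‖a‖⁻¹ • star a, ?_, ?_⟩
      · rw [norm_smul, norm_star, norm_inv, Real.norm_eq_abs, abs_norm,
          inv_mul_cancel₀ (norm_ne_zero_iff.mpr h)]
      · rw [mul_smul_comm, norm_smul, CStarRing.norm_self_mul_star, norm_inv,
          Real.norm_eq_abs, abs_norm]
        field_simp
    exact le_csSup hBdd hmem

lemma isPosElem_op_of_nonneg {a : K' →L[ℂ] K'} (ha : 0 ≤ a) : IsPosElem a := by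
  refine ⟨CFC.sqrt a, ?_⟩
  rw [(IsSelfAdjoint.of_nonneg (CFC.sqrt_nonneg a)).star_eq, CFC.sqrt_mul_sqrt_self a ha]

lemma map_star_of_cp (φ : (K' →L[ℂ] K') →ₗ[ℂ] (H' →L[ℂ] H'))
    (hp : ∀ a, IsPosElem a → IsPosElem (φ a)) (a : K' →L[ℂ] K') :
    φ (star a) = star (φ a) := by
  have hsa : ∀ b : K' →L[ℂ] K', IsSelfAdjoint b → IsSelfAdjoint (φ b) := by
    intro b hb
    have hdecomp : b = b⁺ - b⁻ := (CFC.posPart_sub_negPart b hb).symm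
    have h1 : IsSelfAdjoint (φ b⁺) :=
      (hp _ (isPosElem_op_of_nonneg (CFC.posPart_nonneg b))).isSelfAdjoint'
    have h2 : IsSelfAdjoint (φ b⁻) :=
      (hp _ (isPosElem_op_of_nonneg (CFC.negPart_nonneg b))).isSelfAdjoint'
    rw [hdecomp, map_sub]
    exact h1.sub h2
  have hre : IsSelfAdjoint (φ (ℜ a : K' →L[ℂ] K')) := hsa _ (ℜ a).2
  have him : IsSelfAdjoint (φ (ℑ a : K' →L[ℂ] K')) := hsa _ (ℑ a).2
  have hstar : star a = (ℜ a : K' →L[ℂ] K') - Complex.I • (ℑ a : K' →L[ℂ] K') := by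
    conv_lhs => rw [← realPart_add_I_smul_imaginaryPart a]
    rw [star_add, (ℜ a).2.star_eq, star_smul, (ℑ a).2.star_eq, Complex.star_def,
      Complex.conj_I, neg_smul, ← sub_eq_add_neg]
  have hA : a = (ℜ a : K' →L[ℂ] K') + Complex.I • (ℑ a : K' →L[ℂ] K') :=
    (realPart_add_I_smul_imaginaryPart a).symm
  rw [hstar, map_sub, map_smul]
  conv_rhs => rw [hA]
  rw [map_add, map_smul, star_add, hre.star_eq, star_smul, him.star_eq, Complex.star_def,
    Complex.conj_I, neg_smul, ← sub_eq_add_neg]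

lemma inner_isPosElem {a : H' →L[ℂ] H'} (ha : IsPosElem a) (v : H') :
    ∃ r : ℝ, 0 ≤ r ∧ ⟪v, a v⟫ = (r : ℂ) := by
  obtain ⟨T, rfl⟩ := ha
  refine ⟨‖T v‖ ^ 2, sq_nonneg _, ?_⟩
  rw [ContinuousLinearMap.mul_apply, ContinuousLinearMap.star_eq_adjoint,
    ContinuousLinearMap.adjoint_inner_right, inner_self_eq_norm_sq_to_K]
  norm_cast

lemma quad_nonneg {n : ℕ} (T : Matrix (Fin n) (Fin n) (H' →L[ℂ] H')) (ξ : Fin n → H') :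
    0 ≤ (∑ i, ∑ k, ⟪ξ i, ((star T * T) i k) (ξ k)⟫).re := by
  have key : (∑ i, ∑ k, ⟪ξ i, ((star T * T) i k) (ξ k)⟫)
      = ∑ l, ⟪∑ i, T l i (ξ i), ∑ k, T l k (ξ k)⟫ := by
    have h1 : ∀ i k, (star T * T) i k = ∑ l, star (T l i) * T l k := by
      intro i k
      simp [Matrix.mul_apply, Matrix.star_apply]
    have lhs : (∑ i, ∑ k, ⟪ξ i, ((star T * T) i k) (ξ k)⟫)
        = ∑ i, ∑ k, ∑ l, ⟪T l i (ξ i), T l k (ξ k)⟫ := by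
      simp only [h1, ContinuousLinearMap.sum_apply, ContinuousLinearMap.mul_apply,
        inner_sum, ContinuousLinearMap.star_eq_adjoint,
        ContinuousLinearMap.adjoint_inner_right]
    have rhs : (∑ l, ⟪∑ i, T l i (ξ i), ∑ k, T l k (ξ k)⟫ : ℂ)
        = ∑ l, ∑ i, ∑ k, ⟪T l i (ξ i), T l k (ξ k)⟫ := by
      simp only [inner_sum, sum_inner]
      exact Finset.sum_congr rfl fun l _ => Finset.sum_comm
    rw [lhs, rhs]
    rw [show (∑ i, ∑ k, ∑ l, ⟪T l i (ξ i), T l k (ξ k)⟫ : ℂ)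
        = ∑ i, ∑ l, ∑ k, ⟪T l i (ξ i), T l k (ξ k)⟫ from
      Finset.sum_congr rfl fun i _ => Finset.sum_comm]
    exact Finset.sum_comm
  rw [key, Complex.re_sum]
  refine Finset.sum_nonneg fun l _ => ?_
  have := inner_self_nonneg (𝕜 := ℂ) (x := ∑ i, T l i (ξ i))
  simpa [RCLike.re_to_complex] using this

end Aux16

set_option maxHeartbeats 2000000
/-- Let `G` be a separating generating set of `C`, `Φ : C → B(H)` a
*-representation, and `L := [Φ(C)H]`. If `Ψ : B(K) → B(H)` is a ccp map agreeing with `Φ`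
on `j(G)` for a *-representation `j : C → B(K)`, then `Ψ(j(c)) = P_L Ψ(j(c)) P_L` for all
`c ∈ C`; equivalently, `Ψ(j(c))` vanishes on `Lᗮ` and has range contained in `L`. -/
theorem statement16 {C : Type w} [NonUnitalCStarAlgebra C] (G : Set C)
    (hG : GeneratesCStar G) (hsep : SeparatingSet G)
    {H : Type u} [NormedAddCommGroup H] [InnerProductSpace ℂ H] [CompleteSpace H]
    (Φ : RepOn C H)
    {K : Type v} [NormedAddCommGroup K] [InnerProductSpace ℂ K] [CompleteSpace K]
    (j : RepOn C K)
    (Ψ : (K →L[ℂ] K) →ₗ[ℂ] (H →L[ℂ] H)) (hΨ : IsCCPMap Ψ)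
    (hagree : ∀ g ∈ G, Ψ (j g) = Φ g) :
    ∀ c : C,
      (∀ v : H, v ∈ ((Submodule.span ℂ {w : H | ∃ d h, Φ d h = w}).topologicalClosure)ᗮ →
        Ψ (j c) v = 0) ∧
      (∀ v : H, Ψ (j c) v ∈ (Submodule.span ℂ {w : H | ∃ d h, Φ d h = w}).topologicalClosure) := by
  classical
  set S : Set H := {w : H | ∃ d h, Φ d h = w} with hS
  set L : Submodule ℂ H := (Submodule.span ℂ S).topologicalClosure with hLdef
  have hnorm : ∀ a : K →L[ℂ] K, ‖Ψ a‖ ≤ ‖a‖ := by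
    intro a
    have h := hΨ.2 1 (Matrix.of fun _ _ => a)
    rwa [matCNorm_finOne, matCNorm_finOne, Matrix.map_apply, Matrix.of_apply] at h
  have hpos : ∀ a : K →L[ℂ] K, IsPosElem a → IsPosElem (Ψ a) := by
    intro a ha
    have h := hΨ.1 1 (Matrix.of fun _ _ => a)
      ((isPosElem_matrixFinOne_iff _).mpr (by simpa using ha))
    have h2 := (isPosElem_matrixFinOne_iff _).mp h
    simpa [Matrix.map_apply] using h2
  have hstar : ∀ a : K →L[ℂ] K, Ψ (star a) = star (Ψ a) := map_star_of_cp Ψ hpos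
  have claimA : ∀ v : H, v ∈ Lᗮ → ∀ c' : C, (inner ℂ v (Ψ (j c') v) : ℂ) = 0 := by
    have key : ∀ v : H, v ∈ Lᗮ → ‖v‖ ≤ 1 → ∀ c' : C, (inner ℂ v (Ψ (j c') v) : ℂ) = 0 := by
      intro v hv hv1
      set φ : C →ₗ[ℂ] ℂ :=
        { toFun := fun d => inner ℂ v (Ψ (j d) v)
          map_add' := fun x y => by
            simp [map_add, ContinuousLinearMap.add_apply, inner_add_right]
          map_smul' := fun m x => by
            simp [map_smul, ContinuousLinearMap.smul_apply, inner_smul_right] } with hφ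
      have hφ_apply : ∀ d : C, φ d = (inner ℂ v (Ψ (j d) v) : ℂ) := fun d => rfl
      have hposφ : IsPosFunctional φ := by
        rintro x ⟨y, rfl⟩
        have hjp : IsPosElem (j (star y * y)) := ⟨j y, by rw [map_mul, map_star]⟩
        obtain ⟨r, hr, hre⟩ := inner_isPosElem (hpos _ hjp) v
        rw [hφ_apply, hre]
        exact_mod_cast Complex.zero_le_real.mpr hr
      have hcontr : IsContrFunctional φ := by
        intro x
        rw [hφ_apply]
        have hb : ‖Ψ (j x)‖ ≤ ‖x‖ :=
          (hnorm _).trans (NonUnitalStarAlgHom.norm_apply_le j x)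
        calc ‖(inner ℂ v (Ψ (j x) v) : ℂ)‖ ≤ ‖v‖ * ‖Ψ (j x) v‖ := norm_inner_le_norm _ _
          _ ≤ ‖v‖ * (‖Ψ (j x)‖ * ‖v‖) := by gcongr; exact (Ψ (j x)).le_opNorm v
          _ ≤ 1 * (‖x‖ * 1) := by
              refine mul_le_mul hv1 ?_ (by positivity) zero_le_one
              exact mul_le_mul hb hv1 (norm_nonneg v) (norm_nonneg x)
          _ = ‖x‖ := by ring
      have hvan : ∀ g ∈ G, φ g = 0 := by
        intro g hg
        rw [hφ_apply, hagree g hg]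
        have hmem : Φ g v ∈ L :=
          Submodule.le_topologicalClosure _ (Submodule.subset_span ⟨g, v, rfl⟩)
        have h0 := (Submodule.mem_orthogonal L v).mp hv _ hmem
        rw [← inner_conj_symm, h0, map_zero]
      intro c'
      rw [← hφ_apply]
      exact hsep φ hposφ hcontr hvan c'
    intro v hv c'
    rcases eq_or_ne v 0 with rfl | hvne
    · simp
    · set t : ℂ := ((‖v‖⁻¹ : ℝ) : ℂ) with ht
      have htne : t ≠ 0 := by
        simp [ht, inv_ne_zero, norm_ne_zero_iff.mpr hvne]
      have hu1 : ‖t • v‖ ≤ 1 := by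
        rw [norm_smul, ht, Complex.norm_real, Real.norm_eq_abs, abs_inv, abs_norm,
          inv_mul_cancel₀ (norm_ne_zero_iff.mpr hvne)]
      have humem : t • v ∈ Lᗮ := Submodule.smul_mem _ _ hv
      have h0 := key (t • v) humem hu1 c'
      rw [map_smul] at h0
      rw [inner_smul_left, inner_smul_right, ht, Complex.conj_ofReal] at h0
      have htne' : ((‖v‖⁻¹ : ℝ) : ℂ) ≠ 0 :=
        Complex.ofReal_ne_zero.mpr (inv_ne_zero (norm_ne_zero_iff.mpr hvne))
      exact (mul_eq_zero.mp ((mul_eq_zero.mp h0).resolve_left htne')).resolve_left htne' 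
  have claimB : ∀ (c' : C) (v : H), v ∈ Lᗮ → Ψ (j c') v = 0 := by
    intro c' v hv
    set a : K →L[ℂ] K := j c' with ha
    by_contra hune
    set u : H := Ψ a v with hu
    have huneq : u ≠ 0 := hune
    set M : Matrix (Fin 2) (Fin 2) (K →L[ℂ] K) :=
      Matrix.of ![![star a * a, star a], ![a, 1]] with hMdef
    have hM : IsPosElem M := by
      refine ⟨Matrix.of ![![0, 0], ![a, 1]], ?_⟩
      ext i k
      fin_cases i <;> fin_cases k <;>
        simp [hMdef, Matrix.mul_apply, Matrix.star_apply, Fin.sum_univ_two]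
    obtain ⟨T, hT⟩ := hΨ.1 2 M hM
    have h11 : IsPosElem (Ψ (1 : K →L[ℂ] K)) := hpos _ ⟨1, by simp⟩
    obtain ⟨d, hd0, hD⟩ := inner_isPosElem h11 u
    set r : ℝ := ‖u‖ ^ 2 with hr
    have hrpos : 0 < r := pow_pos (norm_pos_iff.mpr huneq) 2
    set s : ℝ := r / (d + 1) with hs
    have hspos : 0 < s := div_pos hrpos (by linarith)
    have hsd : s * (d + 1) = r := div_mul_cancel₀ _ (by linarith)
    set t : ℂ := ((-s : ℝ) : ℂ) with ht
    set ξ : Fin 2 → H := ![v, t • u] with hξ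
    have hquad := quad_nonneg T ξ
    rw [← hT] at hquad
    have hξ0 : ξ 0 = v := rfl
    have hξ1 : ξ 1 = t • u := rfl
    have hM00 : M 0 0 = star a * a := rfl
    have hM01 : M 0 1 = star a := rfl
    have hM10 : M 1 0 = a := rfl
    have hM11 : M 1 1 = 1 := rfl
    have e00 : (inner ℂ (ξ 0) (((M.map ⇑Ψ) 0 0) (ξ 0)) : ℂ) = 0 := by
      rw [Matrix.map_apply, hM00, hξ0]
      have : star a * a = j (star c' * c') := by rw [map_mul, map_star]
      rw [this]
      exact claimA v hv (star c' * c')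
    have hinneru : (inner ℂ u u : ℂ) = (r : ℂ) := by
      rw [inner_self_eq_norm_sq_to_K, hr]
      norm_cast
    have e01 : (inner ℂ (ξ 0) (((M.map ⇑Ψ) 0 1) (ξ 1)) : ℂ) = t * r := by
      rw [Matrix.map_apply, hM01, hξ0, hξ1, hstar, map_smul, inner_smul_right,
        ContinuousLinearMap.star_eq_adjoint, ContinuousLinearMap.adjoint_inner_right,
        ← hu, hinneru]
    have e10 : (inner ℂ (ξ 1) (((M.map ⇑Ψ) 1 0) (ξ 0)) : ℂ) = t * r := by
      rw [Matrix.map_apply, hM10, hξ1, hξ0, inner_smul_left, ← hu, hinneru, ht,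
        Complex.conj_ofReal]
    have e11 : (inner ℂ (ξ 1) (((M.map ⇑Ψ) 1 1) (ξ 1)) : ℂ) = t ^ 2 * d := by
      rw [Matrix.map_apply, hM11, hξ1, map_smul, inner_smul_left, inner_smul_right,
        hD, ht, Complex.conj_ofReal]
      ring
    rw [Fin.sum_univ_two, Fin.sum_univ_two, Fin.sum_univ_two, e00, e01, e10, e11] at hquad
    have hre : ((0 : ℂ) + t * r + (t * r + t ^ 2 * d)).re = -s * r + (-s * r + s ^ 2 * d) := by
      rw [ht]
      norm_cast
      ring
    rw [hre] at hquad
    nlinarith [mul_pos hspos hrpos, mul_pos hspos hspos]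
  intro c
  refine ⟨fun v hv => claimB c v hv, fun v => ?_⟩
  have horth : (Submodule.span ℂ S)ᗮᗮ = L :=
    Submodule.orthogonal_orthogonal_eq_closure (Submodule.span ℂ S)
  rw [← horth]
  refine (Submodule.mem_orthogonal _ _).mpr fun w hw => ?_
  have hw' : w ∈ Lᗮ := by
    rw [hLdef, ← Submodule.orthogonal_orthogonal_eq_closure,
      Submodule.triorthogonal_eq_orthogonal]
    exact hw
  have hstar2 : Ψ (j c) = star (Ψ (j (star c))) := by
    rw [← hstar (j (star c)), ← map_star j, star_star]
  rw [hstar2, ContinuousLinearMap.star_eq_adjoint, ContinuousLinearMap.adjoint_inner_right,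
    claimB (star c) w hw', inner_zero_left]
end
end
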